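/- arXiv:math/0304109 — 12 statements merged into one kernel-verified Lean document; each statement's English description precedes it below -/
import Mathlib

section
/- Let z, z', d be natural numbers and d' an integer such that d ≤ z, z − d = z' + d + 1 or z − d = z' + d − 1, −z' ≤ d' ≤ z, and moreover d' = d. Let E be the set of subsets M of Z with card(M ∩ Z^*) = card(M ∩ Z_*) + d. Then the square matrix with rows and columns indexed by E, whose (N, M) entry is (−1)^{card(N ∩ M)} (viewed as a matrix over ℚ), is invertible. -/
open Finset

set_option linter.unusedSectionVars false

namespace Stmt1Aux
variable {α : Type*} [DecidableEq α] [Fintype α]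

/-- membership in N ∆ {x} -/
lemma mem_sd {N : Finset α} {x y : α} :
    y ∈ symmDiff N {x} ↔ (y ∈ N ∧ y ≠ x) ∨ (y = x ∧ x ∉ N) := by
  simp only [Finset.mem_symmDiff, mem_singleton]
  constructor
  · rintro (⟨h1,h2⟩|⟨rfl,h2⟩)
    · exact Or.inl ⟨h1, h2⟩
    · exact Or.inr ⟨rfl, h2⟩
  · rintro (⟨h1,h2⟩|⟨rfl,h2⟩)
    · exact Or.inl ⟨h1, h2⟩
    · exact Or.inr ⟨rfl, h2⟩

lemma sd_sd (N : Finset α) (x : α) : symmDiff (symmDiff N {x}) {x} = N :=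
  symmDiff_symmDiff_cancel_right {x} N

/-- key card computation -/
lemma card_sd_inter (S N : Finset α) (x : α) :
    (((symmDiff N {x}) ∩ S).card : ℤ)
      = ((N ∩ S).card : ℤ) + (if x ∈ S then (if x ∈ N then -1 else 1) else 0) := by
  by_cases hxS : x ∈ S
  · by_cases hxN : x ∈ N
    · have h1 : (symmDiff N {x}) ∩ S = (N ∩ S).erase x := by
        ext y
        simp only [mem_inter, mem_sd, mem_erase]
        constructor
        · rintro ⟨(⟨h1,h2⟩|⟨rfl,h2⟩), h3⟩
          · exact ⟨h2, h1, h3⟩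
          · exact absurd hxN h2
        · rintro ⟨h1, h2, h3⟩
          exact ⟨Or.inl ⟨h2, h1⟩, h3⟩
      have hx : x ∈ N ∩ S := mem_inter.mpr ⟨hxN, hxS⟩
      have h2 := Finset.card_erase_add_one hx
      rw [h1, if_pos hxS, if_pos hxN]
      omega
    · have h1 : (symmDiff N {x}) ∩ S = insert x (N ∩ S) := by
        ext y
        simp only [mem_inter, mem_sd, mem_insert]
        constructor
        · rintro ⟨(⟨h1,h2⟩|⟨rfl,h2⟩), h3⟩
          · exact Or.inr ⟨h1, h3⟩
          · exact Or.inl rfl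
        · rintro (rfl|⟨h1,h2⟩)
          · exact ⟨Or.inr ⟨rfl, hxN⟩, hxS⟩
          · exact ⟨Or.inl ⟨h1, fun h => hxN (h ▸ h1)⟩, h2⟩
      have hx : x ∉ N ∩ S := fun h => hxN (mem_inter.mp h).1
      have h2 := Finset.card_insert_of_notMem hx
      rw [h1, if_pos hxS, if_neg hxN, h2]
      push_cast; ring
  · have h1 : (symmDiff N {x}) ∩ S = N ∩ S := by
      ext y
      simp only [mem_inter, mem_sd]
      constructor
      · rintro ⟨(⟨h1,h2⟩|⟨rfl,h2⟩), h3⟩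
        · exact ⟨h1, h3⟩
        · exact absurd h3 hxS
      · rintro ⟨h1, h2⟩
        refine ⟨Or.inl ⟨h1, ?_⟩, h2⟩
        rintro rfl; exact hxS h2
    rw [h1, if_neg hxS]
    ring

/-- sign version -/
lemma sign_sd_inter (S N : Finset α) (x : α) :
    ((-1:ℚ)) ^ ((symmDiff N {x}) ∩ S).card
      = (if x ∈ S then -1 else 1) * (-1) ^ ((N ∩ S).card) := by
  have h := card_sd_inter S N x
  by_cases hxS : x ∈ S
  · by_cases hxN : x ∈ N
    · rw [if_pos hxS, if_pos hxN] at h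
      have h2 : ((N ∩ S).card : ℤ) = ((symmDiff N {x}) ∩ S).card + 1 := by omega
      have h3 : (N ∩ S).card = ((symmDiff N {x}) ∩ S).card + 1 := by exact_mod_cast h2
      rw [if_pos hxS, h3, pow_succ]
      ring
    · rw [if_pos hxS, if_neg hxN] at h
      have h3 : ((symmDiff N {x}) ∩ S).card = (N ∩ S).card + 1 := by exact_mod_cast h
      rw [if_pos hxS, h3, pow_succ]
      ring
  · rw [if_neg hxS] at h
    have h3 : ((symmDiff N {x}) ∩ S).card = (N ∩ S).card := by
      have : (((symmDiff N {x}) ∩ S).card : ℤ) = ((N ∩ S).card : ℤ) := by omega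
      exact_mod_cast this
    rw [if_neg hxS, h3, one_mul]

section Main
variable (Zstar Zsub : Finset α)

/-- sign of an element -/
def sg (x : α) : ℚ := if x ∈ Zstar then 1 else -1

/-- the "T-set": elements whose toggle lowers the level -/
def TT (N : Finset α) : Finset α := (Zstar ∩ N) ∪ (Zsub \ N)

/-- level (defect) of a set -/
def lv (N : Finset α) : ℤ := ((N ∩ Zstar).card : ℤ) - ((N ∩ Zsub).card : ℤ)

lemma mem_or (hunion : Zstar ∪ Zsub = Finset.univ) (x : α) : x ∈ Zstar ∨ x ∈ Zsub := by
  have : x ∈ Zstar ∪ Zsub := by rw [hunion]; exact mem_univ x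
  exact mem_union.mp this

lemma not_both (hdisj : Disjoint Zstar Zsub) {x : α} (h1 : x ∈ Zstar) (h2 : x ∈ Zsub) : False :=
  Finset.disjoint_left.mp hdisj h1 h2

lemma mem_TT {N : Finset α} {x : α} :
    x ∈ TT Zstar Zsub N ↔ ((x ∈ Zstar ∧ x ∈ N) ∨ (x ∈ Zsub ∧ x ∉ N)) := by
  simp [TT]

lemma sg_sq (x : α) : sg Zstar x * sg Zstar x = 1 := by
  unfold sg; split <;> norm_num

/-- toggling x flips its own TT-membership -/
lemma TT_flip_self (hdisj : Disjoint Zstar Zsub) (hunion : Zstar ∪ Zsub = Finset.univ)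
    (N : Finset α) (x : α) :
    x ∈ TT Zstar Zsub (symmDiff N {x}) ↔ x ∉ TT Zstar Zsub N := by
  have hx : x ∈ symmDiff N {x} ↔ x ∉ N := by
    simp [mem_sd]
  rcases mem_or Zstar Zsub hunion x with h | h
  · have h' : x ∉ Zsub := fun hh => not_both Zstar Zsub hdisj h hh
    simp [mem_TT, h, h', hx]
  · have h' : x ∉ Zstar := fun hh => not_both Zstar Zsub hdisj hh h
    simp [mem_TT, h, h', hx]

/-- toggling x ≠ y doesn't change y's TT-membership -/
lemma TT_flip_other (N : Finset α) {x y : α} (hxy : y ≠ x) :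
    (y ∈ TT Zstar Zsub (symmDiff N {x}) ↔ y ∈ TT Zstar Zsub N) := by
  have hy : y ∈ symmDiff N {x} ↔ y ∈ N := by
    simp only [mem_sd]
    constructor
    · rintro (⟨h1,_⟩|⟨rfl,_⟩)
      · exact h1
      · exact absurd rfl hxy
    · intro h; exact Or.inl ⟨h, hxy⟩
  simp [mem_TT, hy]

/-- toggling an element moves the level by ±1 according to TT-membership -/
lemma lv_sd (hdisj : Disjoint Zstar Zsub) (hunion : Zstar ∪ Zsub = Finset.univ)
    (N : Finset α) (x : α) :
    lv Zstar Zsub (symmDiff N {x})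
      = lv Zstar Zsub N + (if x ∈ TT Zstar Zsub N then -1 else 1) := by
  have h1 := card_sd_inter Zstar N x
  have h2 := card_sd_inter Zsub N x
  unfold lv
  rcases mem_or Zstar Zsub hunion x with h | h
  · have h' : x ∉ Zsub := fun hh => not_both Zstar Zsub hdisj h hh
    by_cases hxN : x ∈ N
    · have hT : x ∈ TT Zstar Zsub N := mem_TT Zstar Zsub |>.mpr (Or.inl ⟨h, hxN⟩)
      rw [if_pos hT]
      rw [if_pos h, if_pos hxN] at h1
      rw [if_neg h'] at h2
      omega
    · have hT : x ∉ TT Zstar Zsub N := by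
        rw [mem_TT]; rintro (⟨_,hh⟩|⟨hh,_⟩)
        · exact hxN hh
        · exact not_both Zstar Zsub hdisj h hh
      rw [if_neg hT]
      rw [if_pos h, if_neg hxN] at h1
      rw [if_neg h'] at h2
      omega
  · have h' : x ∉ Zstar := fun hh => not_both Zstar Zsub hdisj hh h
    by_cases hxN : x ∈ N
    · have hT : x ∉ TT Zstar Zsub N := by
        rw [mem_TT]; rintro (⟨hh,_⟩|⟨_,hh⟩)
        · exact not_both Zstar Zsub hdisj hh h
        · exact hh hxN
      rw [if_neg hT]
      rw [if_neg h'] at h1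
      rw [if_pos h, if_pos hxN] at h2
      omega
    · have hT : x ∈ TT Zstar Zsub N := mem_TT Zstar Zsub |>.mpr (Or.inr ⟨h, hxN⟩)
      rw [if_pos hT]
      rw [if_neg h'] at h1
      rw [if_pos h, if_neg hxN] at h2
      omega

/-- the transform f = F w -/
def Ff (w : Finset α → ℚ) (N : Finset α) : ℚ :=
  ∑ M : Finset α, (-1:ℚ) ^ ((N ∩ M).card) * w M

lemma filter_mem_eq (S M : Finset α) : S.filter (· ∈ M) = S ∩ M := by
  ext y; simp [Finset.mem_filter, Finset.mem_inter]

lemma sum_ite_card (S M : Finset α) :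
    ∑ x ∈ S, (if x ∈ M then (-1:ℚ) else 1) = (S.card : ℚ) - 2 * ((S ∩ M).card : ℚ) := by
  have : ∀ x, (if x ∈ M then (-1:ℚ) else 1) = 1 - 2 * (if x ∈ M then (1:ℚ) else 0) := by
    intro x; split <;> norm_num
  rw [Finset.sum_congr rfl (fun x _ => this x)]
  rw [Finset.sum_sub_distrib, Finset.sum_const, ← Finset.mul_sum, Finset.sum_boole]
  rw [filter_mem_eq]
  simp

/-- the column identity -/
lemma column (hdisj : Disjoint Zstar Zsub) (hunion : Zstar ∪ Zsub = Finset.univ)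
    (d : ℤ) (M : Finset α) (hM : ((M ∩ Zstar).card : ℤ) = ((M ∩ Zsub).card : ℤ) + d)
    (N : Finset α) :
    ∑ x : α, sg Zstar x * (-1:ℚ) ^ (((symmDiff N {x}) ∩ M).card)
      = ((Zstar.card : ℚ) - (Zsub.card : ℚ) - 2 * (d : ℚ)) * (-1:ℚ) ^ ((N ∩ M).card) := by
  have key : ∀ x : α, sg Zstar x * (-1:ℚ) ^ (((symmDiff N {x}) ∩ M).card)
      = (sg Zstar x * (if x ∈ M then -1 else 1)) * (-1:ℚ) ^ ((N ∩ M).card) := by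
    intro x
    rw [sign_sd_inter M N x]; ring
  rw [Finset.sum_congr rfl (fun x _ => key x), ← Finset.sum_mul]
  congr 1
  have huniv : (Finset.univ : Finset α) = Zstar ∪ Zsub := hunion.symm
  rw [show (∑ x : α, sg Zstar x * (if x ∈ M then (-1:ℚ) else 1))
      = ∑ x ∈ Zstar ∪ Zsub, sg Zstar x * (if x ∈ M then (-1:ℚ) else 1) by rw [← huniv]]
  rw [Finset.sum_union hdisj]
  have h1 : ∑ x ∈ Zstar, sg Zstar x * (if x ∈ M then (-1:ℚ) else 1)
      = (Zstar.card : ℚ) - 2 * ((Zstar ∩ M).card : ℚ) := by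
    rw [← sum_ite_card Zstar M]
    refine Finset.sum_congr rfl (fun x hx => ?_)
    rw [sg, if_pos hx, one_mul]
  have h2 : ∑ x ∈ Zsub, sg Zstar x * (if x ∈ M then (-1:ℚ) else 1)
      = -((Zsub.card : ℚ) - 2 * ((Zsub ∩ M).card : ℚ)) := by
    rw [← sum_ite_card Zsub M, ← Finset.sum_neg_distrib]
    refine Finset.sum_congr rfl (fun x hx => ?_)
    have hx' : x ∉ Zstar := fun hh => not_both Zstar Zsub hdisj hh hx
    rw [sg, if_neg hx']; ring
  rw [h1, h2]
  have hM' : ((Zstar ∩ M).card : ℚ) = ((Zsub ∩ M).card : ℚ) + (d : ℚ) := by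
    rw [Finset.inter_comm Zstar M, Finset.inter_comm Zsub M]
    exact_mod_cast hM
  rw [hM']; ring

/-- the chain relation -/
lemma chain (hdisj : Disjoint Zstar Zsub) (hunion : Zstar ∪ Zsub = Finset.univ)
    (d : ℤ) (w : Finset α → ℚ)
    (hw : ∀ M, w M ≠ 0 → ((M ∩ Zstar).card : ℤ) = ((M ∩ Zsub).card : ℤ) + d)
    (N : Finset α) :
    ∑ x : α, sg Zstar x * Ff w (symmDiff N {x})
      = ((Zstar.card : ℚ) - (Zsub.card : ℚ) - 2 * (d : ℚ)) * Ff w N := by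
  unfold Ff
  rw [Finset.mul_sum]
  have : ∀ x : α, sg Zstar x * ∑ M : Finset α, (-1:ℚ) ^ (((symmDiff N {x}) ∩ M).card) * w M
      = ∑ M : Finset α, sg Zstar x * ((-1:ℚ) ^ (((symmDiff N {x}) ∩ M).card) * w M) := by
    intro x; rw [Finset.mul_sum]
  rw [Finset.sum_congr rfl (fun x _ => this x), Finset.sum_comm]
  refine Finset.sum_congr rfl (fun M _ => ?_)
  by_cases hwM : w M = 0
  · simp [hwM]
  · have hM := hw M hwM
    calc ∑ x : α, sg Zstar x * ((-1:ℚ) ^ (((symmDiff N {x}) ∩ M).card) * w M)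
        = (∑ x : α, sg Zstar x * (-1:ℚ) ^ (((symmDiff N {x}) ∩ M).card)) * w M := by
          rw [Finset.sum_mul]; exact Finset.sum_congr rfl (fun x _ => by ring)
      _ = (((Zstar.card : ℚ) - (Zsub.card : ℚ) - 2 * (d : ℚ)) * (-1:ℚ) ^ ((N ∩ M).card)) * w M := by
          rw [column Zstar Zsub hdisj hunion d M hM N]
      _ = ((Zstar.card : ℚ) - (Zsub.card : ℚ) - 2 * (d : ℚ)) * ((-1:ℚ) ^ ((N ∩ M).card) * w M) := by
          ring

/-- M splits as M∩Zstar ∪ M∩Zsub -/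
lemma card_split (hdisj : Disjoint Zstar Zsub) (hunion : Zstar ∪ Zsub = Finset.univ)
    (M : Finset α) : M.card = (M ∩ Zstar).card + (M ∩ Zsub).card := by
  have h1 : (M ∩ Zstar) ∪ (M ∩ Zsub) = M := by
    rw [← Finset.inter_union_distrib_left, hunion, Finset.inter_univ]
  have h2 : Disjoint (M ∩ Zstar) (M ∩ Zsub) :=
    Finset.disjoint_of_subset_left Finset.inter_subset_right
      (Finset.disjoint_of_subset_right Finset.inter_subset_right hdisj)
  calc M.card = ((M ∩ Zstar) ∪ (M ∩ Zsub)).card := by rw [h1]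
    _ = (M ∩ Zstar).card + (M ∩ Zsub).card := Finset.card_union_of_disjoint h2

/-- complement flips signs by (-1)^d on the slice -/
lemma compl_sign (hdisj : Disjoint Zstar Zsub) (hunion : Zstar ∪ Zsub = Finset.univ)
    (d : ℕ) (M : Finset α) (hM : ((M ∩ Zstar).card : ℤ) = ((M ∩ Zsub).card : ℤ) + (d:ℤ))
    (N : Finset α) :
    (-1:ℚ) ^ (((Finset.univ \ N) ∩ M).card) = (-1:ℚ)^d * (-1:ℚ) ^ ((N ∩ M).card) := by
  have h0 : (Finset.univ \ N) ∩ M = M \ N := by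
    ext y; simp [Finset.mem_sdiff, Finset.mem_inter, and_comm]
  have h1 : (M ∩ N).card + (M \ N).card = M.card := Finset.card_inter_add_card_sdiff M N
  have h2 := card_split Zstar Zsub hdisj hunion M
  have h3 : M.card = 2 * (M ∩ Zsub).card + d := by omega
  have h4 : (M \ N).card + (N ∩ M).card = 2 * (M ∩ Zsub).card + d := by
    rw [Finset.inter_comm N M]; omega
  have h5 : (-1:ℚ) ^ ((M \ N).card) * (-1:ℚ) ^ ((N ∩ M).card) = (-1:ℚ)^d := by
    rw [← pow_add, h4, pow_add, pow_mul]
    norm_num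
  have h6 : (-1:ℚ) ^ ((N ∩ M).card) * (-1:ℚ) ^ ((N ∩ M).card) = 1 := by
    rw [← pow_add, ← two_mul, pow_mul]; norm_num
  rw [h0]
  calc (-1:ℚ) ^ ((M \ N).card)
      = (-1:ℚ) ^ ((M \ N).card) * ((-1:ℚ) ^ ((N ∩ M).card) * (-1:ℚ) ^ ((N ∩ M).card)) := by
        rw [h6, mul_one]
    _ = ((-1:ℚ) ^ ((M \ N).card) * (-1:ℚ) ^ ((N ∩ M).card)) * (-1:ℚ) ^ ((N ∩ M).card) := by ring
    _ = (-1:ℚ)^d * (-1:ℚ) ^ ((N ∩ M).card) := by rw [h5]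

/-- parity of symmetric difference -/
lemma sign_symmDiff_inter (N M M₀ : Finset α) :
    (-1:ℚ) ^ ((N ∩ (symmDiff M M₀)).card)
      = (-1:ℚ) ^ ((N ∩ M).card) * (-1:ℚ) ^ ((N ∩ M₀).card) := by
  have h0 : N ∩ (symmDiff M M₀) = symmDiff (N ∩ M) (N ∩ M₀) := by
    have := inf_symmDiff_distrib_left N M M₀
    simpa [Finset.inf_eq_inter] using this
  set A := N ∩ M with hA
  set B := N ∩ M₀ with hB
  have h1 : (symmDiff A B) = (A \ B) ∪ (B \ A) := by
    ext y; simp [Finset.mem_symmDiff, Finset.mem_sdiff, Finset.mem_union]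
  have hdAB : Disjoint (A \ B) (B \ A) := by
    rw [Finset.disjoint_left]
    intro a ha hb
    exact (Finset.mem_sdiff.mp hb).2 (Finset.mem_sdiff.mp ha).1
  have h2 : (symmDiff A B).card = (A \ B).card + (B \ A).card := by
    rw [h1, Finset.card_union_of_disjoint hdAB]
  have h3 : (A ∩ B).card + (A \ B).card = A.card := Finset.card_inter_add_card_sdiff A B
  have h4 : (B ∩ A).card + (B \ A).card = B.card := Finset.card_inter_add_card_sdiff B A
  have h5 : (B ∩ A).card = (A ∩ B).card := by rw [Finset.inter_comm]
  have h6 : (symmDiff A B).card + 2 * (A ∩ B).card = A.card + B.card := by omega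
  rw [h0]
  have : (-1:ℚ) ^ ((symmDiff A B).card) * ((-1:ℚ) ^ (2 * (A ∩ B).card)) = (-1:ℚ)^(A.card + B.card) := by
    rw [← pow_add, h6]
  have h7 : (-1:ℚ) ^ (2 * (A ∩ B).card) = 1 := by rw [pow_mul]; norm_num
  rw [h7, mul_one] at this
  rw [this, pow_add]

/-- sum of signs over all subsets vanishes for nonempty S -/
lemma sum_sign_zero {S : Finset α} (hS : S ≠ ∅) :
    ∑ N : Finset α, (-1:ℚ) ^ ((N ∩ S).card) = 0 := by
  obtain ⟨x, hx⟩ := Finset.nonempty_iff_ne_empty.mpr hS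
  have hbij : Function.Bijective (fun N : Finset α => symmDiff N {x}) :=
    Function.Involutive.bijective (fun N => sd_sd N x)
  have h := Fintype.sum_bijective _ hbij
    (fun N : Finset α => (-1:ℚ) ^ ((N ∩ S).card))
    (fun N : Finset α => -((-1:ℚ) ^ ((N ∩ S).card)))
    (fun N => by
      show (-1:ℚ) ^ ((N ∩ S).card) = -((-1:ℚ) ^ (((symmDiff N {x}) ∩ S).card))
      rw [sign_sd_inter S N x, if_pos hx]; ring)
  have h2 : ∑ N : Finset α, (-1:ℚ) ^ ((N ∩ S).card)
      = -∑ N : Finset α, (-1:ℚ) ^ ((N ∩ S).card) := by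
    simpa using h
  linarith

/-- Fourier inversion: recovering w from f = F w -/
lemma inversion (w : Finset α → ℚ) (M₀ : Finset α) :
    ∑ N : Finset α, (-1:ℚ) ^ ((N ∩ M₀).card) * Ff w N
      = (Fintype.card (Finset α) : ℚ) * w M₀ := by
  unfold Ff
  have step1 : ∀ N : Finset α, (-1:ℚ) ^ ((N ∩ M₀).card)
        * ∑ M : Finset α, (-1:ℚ) ^ ((N ∩ M).card) * w M
      = ∑ M : Finset α, (-1:ℚ) ^ ((N ∩ (symmDiff M M₀)).card) * w M := by
    intro N
    rw [Finset.mul_sum]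
    refine Finset.sum_congr rfl (fun M _ => ?_)
    rw [sign_symmDiff_inter N M M₀]; ring
  rw [Finset.sum_congr rfl (fun N _ => step1 N), Finset.sum_comm]
  rw [Finset.sum_eq_single M₀]
  · rw [symmDiff_self]
    simp only [Finset.bot_eq_empty, Finset.inter_empty, Finset.card_empty, pow_zero, one_mul]
    rw [Finset.sum_const, Finset.card_univ]
    simp [mul_comm]
  · intro M _ hM
    have hne : symmDiff M M₀ ≠ ∅ := by
      intro h
      exact hM (by simpa [symmDiff_eq_bot, Finset.bot_eq_empty] using h)
    rw [← Finset.sum_mul, sum_sign_zero hne, zero_mul]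
  · intro h; exact absurd (Finset.mem_univ M₀) h

/-- the raising operator -/
def Uop (g : Finset α → ℚ) (N : Finset α) : ℚ :=
  ∑ x ∈ TT Zstar Zsub N, sg Zstar x * g (symmDiff N {x})

/-- the lowering operator -/
def Lop (g : Finset α → ℚ) (N : Finset α) : ℚ :=
  ∑ x ∈ Finset.univ \ TT Zstar Zsub N, sg Zstar x * g (symmDiff N {x})

/-- sign indicator of TT-membership -/
def tau (N : Finset α) (x : α) : ℚ := if x ∈ TT Zstar Zsub N then 1 else -1

lemma U_add_L (g : Finset α → ℚ) (N : Finset α) :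
    Uop Zstar Zsub g N + Lop Zstar Zsub g N = ∑ x : α, sg Zstar x * g (symmDiff N {x}) := by
  rw [Uop, Lop, add_comm]
  exact Finset.sum_sdiff (Finset.subset_univ _)

lemma U_sub_L (g : Finset α → ℚ) (N : Finset α) :
    Uop Zstar Zsub g N - Lop Zstar Zsub g N
      = ∑ x : α, sg Zstar x * tau Zstar Zsub N x * g (symmDiff N {x}) := by
  rw [show (∑ x : α, sg Zstar x * tau Zstar Zsub N x * g (symmDiff N {x}))
      = ∑ x ∈ Finset.univ \ TT Zstar Zsub N, sg Zstar x * tau Zstar Zsub N x * g (symmDiff N {x})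
        + ∑ x ∈ TT Zstar Zsub N, sg Zstar x * tau Zstar Zsub N x * g (symmDiff N {x})
      from (Finset.sum_sdiff (Finset.subset_univ _)).symm]
  rw [Uop, Lop]
  have h1 : ∀ x ∈ TT Zstar Zsub N,
      sg Zstar x * tau Zstar Zsub N x * g (symmDiff N {x}) = sg Zstar x * g (symmDiff N {x}) := by
    intro x hx; rw [tau, if_pos hx]; ring
  have h2 : ∀ x ∈ Finset.univ \ TT Zstar Zsub N,
      sg Zstar x * tau Zstar Zsub N x * g (symmDiff N {x}) = -(sg Zstar x * g (symmDiff N {x})) := by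
    intro x hx
    rw [tau, if_neg (Finset.mem_sdiff.mp hx).2]; ring
  rw [Finset.sum_congr rfl h1, Finset.sum_congr rfl h2, Finset.sum_neg_distrib]
  ring

lemma tau_flip_self (hdisj : Disjoint Zstar Zsub) (hunion : Zstar ∪ Zsub = Finset.univ)
    (N : Finset α) (x : α) :
    tau Zstar Zsub (symmDiff N {x}) x = - tau Zstar Zsub N x := by
  unfold tau
  by_cases h : x ∈ TT Zstar Zsub N
  · rw [if_pos h, if_neg (fun hh => ((TT_flip_self Zstar Zsub hdisj hunion N x).mp hh) h)]
  · rw [if_neg h, if_pos ((TT_flip_self Zstar Zsub hdisj hunion N x).mpr h)]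
    norm_num

lemma tau_flip_other (N : Finset α) {x y : α} (hxy : y ≠ x) :
    tau Zstar Zsub (symmDiff N {x}) y = tau Zstar Zsub N y := by
  unfold tau
  by_cases h : y ∈ TT Zstar Zsub N
  · rw [if_pos h, if_pos ((TT_flip_other Zstar Zsub N hxy).mpr h)]
  · rw [if_neg h, if_neg (fun hh => h ((TT_flip_other Zstar Zsub N hxy).mp hh))]

lemma sd_right_comm (N : Finset α) (x y : α) :
    symmDiff (symmDiff N {x}) {y} = symmDiff (symmDiff N {y}) {x} :=
  symmDiff_right_comm N {x} {y}

lemma offdiag (hdisj : Disjoint Zstar Zsub) (hunion : Zstar ∪ Zsub = Finset.univ)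
    (g : Finset α → ℚ) {x y : α} (hxy : y ≠ x) :
    ∑ N : Finset α, tau Zstar Zsub N y * (g (symmDiff N {x}) * g (symmDiff N {y})) = 0 := by
  set e : Finset α → Finset α := fun N => symmDiff (symmDiff N {x}) {y} with he
  have hinv : Function.Involutive e := by
    intro N
    show symmDiff (symmDiff (symmDiff (symmDiff N {x}) {y}) {x}) {y} = N
    rw [sd_right_comm (symmDiff N {x}) y x, sd_sd, sd_sd]
  have key : ∀ N : Finset α,
      tau Zstar Zsub N y * (g (symmDiff N {x}) * g (symmDiff N {y}))
      = - (tau Zstar Zsub (e N) y * (g (symmDiff (e N) {x}) * g (symmDiff (e N) {y}))) := by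
    intro N
    have h1 : symmDiff (e N) {x} = symmDiff N {y} := by
      rw [he]
      show symmDiff (symmDiff (symmDiff N {x}) {y}) {x} = symmDiff N {y}
      rw [sd_right_comm (symmDiff N {x}) y x]
      show symmDiff (symmDiff (symmDiff N {x}) {x}) {y} = symmDiff N {y}
      rw [sd_sd]
    have h2 : symmDiff (e N) {y} = symmDiff N {x} := by
      rw [he]; exact sd_sd _ y
    have h3 : tau Zstar Zsub (e N) y = - tau Zstar Zsub N y := by
      rw [he]
      show tau Zstar Zsub (symmDiff (symmDiff N {x}) {y}) y = - tau Zstar Zsub N y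
      rw [tau_flip_self Zstar Zsub hdisj hunion (symmDiff N {x}) y,
        tau_flip_other Zstar Zsub N hxy]
    rw [h1, h2, h3]; ring
  have hsum := Fintype.sum_bijective e hinv.bijective
    (fun N => tau Zstar Zsub N y * (g (symmDiff N {x}) * g (symmDiff N {y})))
    (fun N => - (tau Zstar Zsub N y * (g (symmDiff N {x}) * g (symmDiff N {y}))))
    (fun N => by simpa using key N)
  have h2 : ∑ N : Finset α, tau Zstar Zsub N y * (g (symmDiff N {x}) * g (symmDiff N {y}))
      = - ∑ N : Finset α, tau Zstar Zsub N y * (g (symmDiff N {x}) * g (symmDiff N {y})) := by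
    simpa using hsum
  linarith

lemma diag_reindex (hdisj : Disjoint Zstar Zsub) (hunion : Zstar ∪ Zsub = Finset.univ)
    (g : Finset α → ℚ) (x : α) :
    ∑ N : Finset α, tau Zstar Zsub N x * (g (symmDiff N {x}))^2
      = ∑ N : Finset α, -(tau Zstar Zsub N x) * (g N)^2 := by
  refine Fintype.sum_bijective (fun N : Finset α => symmDiff N {x})
    (Function.Involutive.bijective (fun N => sd_sd N x)) _ _ (fun N => ?_)
  show tau Zstar Zsub N x * (g (symmDiff N {x}))^2
      = -(tau Zstar Zsub (symmDiff N {x}) x) * (g (symmDiff N {x}))^2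
  rw [tau_flip_self Zstar Zsub hdisj hunion N x]
  ring

lemma sum_neg_tau (hdisj : Disjoint Zstar Zsub) (hunion : Zstar ∪ Zsub = Finset.univ)
    (N : Finset α) :
    ∑ x : α, -(tau Zstar Zsub N x)
      = (Zstar.card : ℚ) - (Zsub.card : ℚ) - 2 * ((lv Zstar Zsub N : ℤ) : ℚ) := by
  have hTsub : TT Zstar Zsub N ⊆ Finset.univ := Finset.subset_univ _
  have hstep : ∀ x : α, -(tau Zstar Zsub N x)
      = 1 - 2 * (if x ∈ TT Zstar Zsub N then (1:ℚ) else 0) := by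
    intro x; unfold tau; split <;> norm_num
  rw [Finset.sum_congr rfl (fun x _ => hstep x), Finset.sum_sub_distrib, Finset.sum_const,
    ← Finset.mul_sum, Finset.sum_boole]
  have hfil : Finset.univ.filter (· ∈ TT Zstar Zsub N) = TT Zstar Zsub N := by
    ext y; simp
  rw [hfil]
  -- card computations
  have hd1 : Disjoint (Zstar ∩ N) (Zsub \ N) := by
    rw [Finset.disjoint_left]
    intro a ha hb
    exact not_both Zstar Zsub hdisj (Finset.mem_inter.mp ha).1 (Finset.mem_sdiff.mp hb).1
  have hcT : (TT Zstar Zsub N).card = (Zstar ∩ N).card + (Zsub \ N).card := by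
    rw [TT, Finset.card_union_of_disjoint hd1]
  have hc2 : (Zsub ∩ N).card + (Zsub \ N).card = Zsub.card :=
    Finset.card_inter_add_card_sdiff Zsub N
  have hcu : Fintype.card α = Zstar.card + Zsub.card := by
    rw [← Finset.card_univ, ← hunion, Finset.card_union_of_disjoint hdisj]
  have hlv : (lv Zstar Zsub N : ℤ) = ((Zstar ∩ N).card : ℤ) - ((Zsub ∩ N).card : ℤ) := by
    rw [lv, Finset.inter_comm N Zstar, Finset.inter_comm N Zsub]
  have : ((Fintype.card α : ℚ)) - 2 * ((TT Zstar Zsub N).card : ℚ)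
      = (Zstar.card : ℚ) - (Zsub.card : ℚ) - 2 * ((lv Zstar Zsub N : ℤ) : ℚ) := by
    have hz : ((lv Zstar Zsub N : ℤ) : ℚ) = ((Zstar ∩ N).card : ℚ) - ((Zsub ∩ N).card : ℚ) := by
      rw [hlv]; push_cast; ring
    rw [hz, hcu, hcT]
    have : (Zsub \ N).card = Zsub.card - (Zsub ∩ N).card := by omega
    rw [this]
    have hle : (Zsub ∩ N).card ≤ Zsub.card := Finset.card_le_card (Finset.inter_subset_left)
    push_cast [hle]
    ring
  rw [← this]
  simp [Finset.card_univ, nsmul_eq_mul, mul_one]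

/-- the key norm identity -/
lemma norm_id (hdisj : Disjoint Zstar Zsub) (hunion : Zstar ∪ Zsub = Finset.univ)
    (g : Finset α → ℚ) :
    ∑ N : Finset α, (Uop Zstar Zsub g N)^2
      = ∑ N : Finset α, (Lop Zstar Zsub g N)^2
        + ∑ N : Finset α, ((Zstar.card : ℚ) - (Zsub.card : ℚ)
            - 2 * ((lv Zstar Zsub N : ℤ) : ℚ)) * (g N)^2 := by
  have main : ∑ N : Finset α, ((Uop Zstar Zsub g N)^2 - (Lop Zstar Zsub g N)^2)
      = ∑ N : Finset α, ((Zstar.card : ℚ) - (Zsub.card : ℚ)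
          - 2 * ((lv Zstar Zsub N : ℤ) : ℚ)) * (g N)^2 := by
    have expand : ∀ N : Finset α,
        (Uop Zstar Zsub g N)^2 - (Lop Zstar Zsub g N)^2
        = ∑ x : α, ∑ y : α, (sg Zstar x * g (symmDiff N {x}))
            * (sg Zstar y * tau Zstar Zsub N y * g (symmDiff N {y})) := by
      intro N
      have h1 : (Uop Zstar Zsub g N)^2 - (Lop Zstar Zsub g N)^2
          = (Uop Zstar Zsub g N + Lop Zstar Zsub g N)
            * (Uop Zstar Zsub g N - Lop Zstar Zsub g N) := by ring
      rw [h1, U_add_L, U_sub_L, Finset.sum_mul_sum]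
    rw [Finset.sum_congr rfl (fun N _ => expand N)]
    rw [Finset.sum_comm]
    have swap2 : ∀ x : α, ∑ N : Finset α, ∑ y : α, (sg Zstar x * g (symmDiff N {x}))
            * (sg Zstar y * tau Zstar Zsub N y * g (symmDiff N {y}))
        = ∑ y : α, ∑ N : Finset α, (sg Zstar x * g (symmDiff N {x}))
            * (sg Zstar y * tau Zstar Zsub N y * g (symmDiff N {y})) := fun x => Finset.sum_comm
    rw [Finset.sum_congr rfl (fun x _ => swap2 x)]
    have inner : ∀ x : α, ∑ y : α, ∑ N : Finset α, (sg Zstar x * g (symmDiff N {x}))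
            * (sg Zstar y * tau Zstar Zsub N y * g (symmDiff N {y}))
        = ∑ N : Finset α, (tau Zstar Zsub N x) * (g (symmDiff N {x}))^2 := by
      intro x
      have split := Finset.add_sum_erase Finset.univ
        (fun y => ∑ N : Finset α, (sg Zstar x * g (symmDiff N {x}))
            * (sg Zstar y * tau Zstar Zsub N y * g (symmDiff N {y}))) (Finset.mem_univ x)
      rw [← split]
      have hzero : ∑ y ∈ Finset.univ.erase x, ∑ N : Finset α,
          (sg Zstar x * g (symmDiff N {x}))
            * (sg Zstar y * tau Zstar Zsub N y * g (symmDiff N {y})) = 0 := by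
        refine Finset.sum_eq_zero (fun y hy => ?_)
        have hyx : y ≠ x := (Finset.mem_erase.mp hy).1
        have : ∀ N : Finset α, (sg Zstar x * g (symmDiff N {x}))
              * (sg Zstar y * tau Zstar Zsub N y * g (symmDiff N {y}))
            = (sg Zstar x * sg Zstar y)
              * (tau Zstar Zsub N y * (g (symmDiff N {x}) * g (symmDiff N {y}))) := by
          intro N; ring
        rw [Finset.sum_congr rfl (fun N _ => this N), ← Finset.mul_sum,
          offdiag Zstar Zsub hdisj hunion g hyx, mul_zero]
      rw [hzero, add_zero]
      refine Finset.sum_congr rfl (fun N _ => ?_)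
      calc sg Zstar x * g (symmDiff N {x}) * (sg Zstar x * tau Zstar Zsub N x * g (symmDiff N {x}))
          = (sg Zstar x * sg Zstar x) * (tau Zstar Zsub N x * (g (symmDiff N {x}))^2) := by ring
        _ = tau Zstar Zsub N x * (g (symmDiff N {x}))^2 := by rw [sg_sq Zstar x, one_mul]
    rw [Finset.sum_congr rfl (fun x _ => inner x)]
    have reind : ∀ x : α, ∑ N : Finset α, (tau Zstar Zsub N x) * (g (symmDiff N {x}))^2
        = ∑ N : Finset α, -(tau Zstar Zsub N x) * (g N)^2 := by
      intro x
      exact diag_reindex Zstar Zsub hdisj hunion g x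
    rw [Finset.sum_congr rfl (fun x _ => reind x), Finset.sum_comm]
    refine Finset.sum_congr rfl (fun N _ => ?_)
    have : ∑ x : α, -(tau Zstar Zsub N x) * (g N)^2
        = (∑ x : α, -(tau Zstar Zsub N x)) * (g N)^2 := by
      rw [Finset.sum_mul]
    rw [this, sum_neg_tau Zstar Zsub hdisj hunion N]
  have := Finset.sum_sub_distrib (s := (Finset.univ : Finset (Finset α)))
    (f := fun N => (Uop Zstar Zsub g N)^2) (g := fun N => (Lop Zstar Zsub g N)^2)
  rw [this] at main
  linarith

/-- the heart of the argument: the kernel is trivial -/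
lemma kernel_trivial (hdisj : Disjoint Zstar Zsub) (hunion : Zstar ∪ Zsub = Finset.univ)
    (d : ℕ) (e : ℤ) (he : e = 1 ∨ e = -1)
    (hze : (Zstar.card : ℤ) - (Zsub.card : ℤ) = 2 * d + e)
    (w : Finset α → ℚ)
    (hw : ∀ M, w M ≠ 0 → ((M ∩ Zstar).card : ℤ) = ((M ∩ Zsub).card : ℤ) + (d:ℤ))
    (hker : ∀ N : Finset α, lv Zstar Zsub N = (d:ℤ) → Ff w N = 0) :
    ∀ M, w M = 0 := by
  set m : ℤ := min (d : ℤ) ((d:ℤ) + e) with hm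
  have hmd : 2 * (d:ℤ) + e = 2 * m + 1 := by rcases he with h|h <;> simp [hm, h] <;> omega
  have hmset : (m = d ∧ m + 1 = d + e) ∨ (m = d + e ∧ m + 1 = d) := by
    rcases he with h|h <;> simp [hm, h] <;> omega
  -- complement relation
  have hcompl : ∀ N : Finset α, Ff w (Finset.univ \ N) = (-1:ℚ)^d * Ff w N := by
    intro N
    unfold Ff
    rw [Finset.mul_sum]
    refine Finset.sum_congr rfl (fun M _ => ?_)
    by_cases hM : w M = 0
    · simp [hM]
    · rw [compl_sign Zstar Zsub hdisj hunion d M (hw M hM) N]; ring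
  have hlvcompl : ∀ N : Finset α,
      lv Zstar Zsub (Finset.univ \ N) = 2 * (d:ℤ) + e - lv Zstar Zsub N := by
    intro N
    have h1 : (Finset.univ \ N) ∩ Zstar = Zstar \ N := by
      ext y; simp [Finset.mem_sdiff, Finset.mem_inter, and_comm]
    have h2 : (Finset.univ \ N) ∩ Zsub = Zsub \ N := by
      ext y; simp [Finset.mem_sdiff, Finset.mem_inter, and_comm]
    have h3 : (Zstar ∩ N).card + (Zstar \ N).card = Zstar.card :=
      Finset.card_inter_add_card_sdiff Zstar N
    have h4 : (Zsub ∩ N).card + (Zsub \ N).card = Zsub.card :=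
      Finset.card_inter_add_card_sdiff Zsub N
    rw [lv, lv, h1, h2, Finset.inter_comm N Zstar, Finset.inter_comm N Zsub]
    omega
  have hne : ((-1:ℚ)^d) ≠ 0 := pow_ne_zero d (by norm_num)
  -- vanishing on the two middle levels
  have hmid : ∀ N : Finset α,
      (lv Zstar Zsub N = (d:ℤ) ∨ lv Zstar Zsub N = (d:ℤ) + e) → Ff w N = 0 := by
    intro N hN
    rcases hN with h | h
    · exact hker N h
    · have h1 : lv Zstar Zsub (Finset.univ \ N) = (d:ℤ) := by rw [hlvcompl N, h]; ring
      have h2 := hker _ h1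
      rw [hcompl N] at h2
      exact (mul_eq_zero.mp h2).resolve_left hne
  -- chain relation with eigenvalue e
  have chainE : ∀ N : Finset α,
      ∑ x : α, sg Zstar x * Ff w (symmDiff N {x}) = ((e:ℤ):ℚ) * Ff w N := by
    intro N
    have := chain Zstar Zsub hdisj hunion (d:ℤ) w hw N
    have hco : (Zstar.card : ℚ) - (Zsub.card : ℚ) - 2 * (((d:ℤ)):ℚ) = ((e:ℤ):ℚ) := by
      have : ((Zstar.card:ℤ) : ℚ) - ((Zsub.card:ℤ) : ℚ) = ((2 * (d:ℤ) + e : ℤ) : ℚ) := by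
        exact_mod_cast congrArg (fun t : ℤ => (t : ℚ)) hze
      push_cast at this ⊢
      linarith
    rw [this, hco]
  -- the downward induction
  have main : ∀ t : ℕ,
      (∀ N : Finset α, lv Zstar Zsub N = m + 1 - t → Ff w N = 0)
      ∧ (∀ N : Finset α, lv Zstar Zsub N = m + 1 - (t+1) → Ff w N = 0) := by
    intro t
    induction t with
    | zero =>
      constructor
      · intro N hN
        refine hmid N ?_
        rcases hmset with ⟨h1, h2⟩ | ⟨h1, h2⟩ <;> omega
      · intro N hN
        refine hmid N ?_
        rcases hmset with ⟨h1, h2⟩ | ⟨h1, h2⟩ <;> omega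
    | succ t ih =>
      refine ⟨ih.2, ?_⟩
      -- level c - 1 where c = m - t
      set c : ℤ := m - t with hc
      set g : Finset α → ℚ :=
        fun N => if lv Zstar Zsub N = c - 1 then Ff w N else 0 with hg
      have hQt : ∀ N : Finset α, lv Zstar Zsub N = c + 1 → Ff w N = 0 := by
        intro N hN; exact ih.1 N (by omega)
      have hQt1 : ∀ N : Finset α, lv Zstar Zsub N = c → Ff w N = 0 := by
        intro N hN; exact ih.2 N (by omega)
      have hU : ∀ N : Finset α, Uop Zstar Zsub g N = 0 := by
        intro N
        by_cases hcN : lv Zstar Zsub N = c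
        · have hUf : Uop Zstar Zsub g N
              = ∑ x ∈ TT Zstar Zsub N, sg Zstar x * Ff w (symmDiff N {x}) := by
            rw [Uop]
            refine Finset.sum_congr rfl (fun x hx => ?_)
            have hlvx : lv Zstar Zsub (symmDiff N {x}) = c - 1 := by
              rw [lv_sd Zstar Zsub hdisj hunion N x, if_pos hx, hcN]; ring
            rw [hg]; simp only [if_pos hlvx]
          have hsplit := Finset.sum_sdiff (f := fun x => sg Zstar x * Ff w (symmDiff N {x}))
            (Finset.subset_univ (TT Zstar Zsub N))
          have hout : ∑ x ∈ Finset.univ \ TT Zstar Zsub N,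
              sg Zstar x * Ff w (symmDiff N {x}) = 0 := by
            refine Finset.sum_eq_zero (fun x hx => ?_)
            have hxn : x ∉ TT Zstar Zsub N := (Finset.mem_sdiff.mp hx).2
            have hlvx : lv Zstar Zsub (symmDiff N {x}) = c + 1 := by
              rw [lv_sd Zstar Zsub hdisj hunion N x, if_neg hxn, hcN]
            rw [hQt _ hlvx, mul_zero]
          have hall : ∑ x : α, sg Zstar x * Ff w (symmDiff N {x}) = 0 := by
            rw [chainE N, hQt1 N hcN, mul_zero]
          rw [hUf]
          linarith [hsplit, hout, hall]
        · rw [Uop]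
          refine Finset.sum_eq_zero (fun x hx => ?_)
          have hlvx : lv Zstar Zsub (symmDiff N {x}) = lv Zstar Zsub N - 1 := by
            rw [lv_sd Zstar Zsub hdisj hunion N x, if_pos hx]; ring
          have : g (symmDiff N {x}) = 0 := by
            rw [hg]; simp only [hlvx]
            rw [if_neg (by omega)]
          rw [this, mul_zero]
      -- apply the norm identity
      have hnorm := norm_id Zstar Zsub hdisj hunion g
      have hUzero : ∑ N : Finset α, (Uop Zstar Zsub g N)^2 = 0 :=
        Finset.sum_eq_zero (fun N _ => by rw [hU N]; ring)
      have hLnn : (0:ℚ) ≤ ∑ N : Finset α, (Lop Zstar Zsub g N)^2 :=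
        Finset.sum_nonneg (fun N _ => sq_nonneg _)
      have hterm_nn : ∀ N ∈ (Finset.univ : Finset (Finset α)),
          (0:ℚ) ≤ ((Zstar.card : ℚ) - (Zsub.card : ℚ)
            - 2 * ((lv Zstar Zsub N : ℤ) : ℚ)) * (g N)^2 := by
        intro N _
        by_cases hlvN : lv Zstar Zsub N = c - 1
        · have hpos : (0:ℚ) ≤ (Zstar.card : ℚ) - (Zsub.card : ℚ)
              - 2 * ((lv Zstar Zsub N : ℤ) : ℚ) := by
            have hz : ((Zstar.card:ℤ):ℚ) - ((Zsub.card:ℤ):ℚ) - 2*((lv Zstar Zsub N : ℤ):ℚ)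
                = ((2*(d:ℤ) + e - 2*(lv Zstar Zsub N) : ℤ) : ℚ) := by
              push_cast
              have : ((Zstar.card:ℤ):ℚ) - ((Zsub.card:ℤ):ℚ) = ((2 * (d:ℤ) + e : ℤ) : ℚ) := by
                exact_mod_cast congrArg (fun t : ℤ => (t : ℚ)) hze
              push_cast at this
              linarith
            have hzpos : (0:ℤ) ≤ 2*(d:ℤ) + e - 2*(lv Zstar Zsub N) := by
              rw [hlvN]; omega
            push_cast at hz
            rw [show (Zstar.card : ℚ) - (Zsub.card : ℚ) - 2 * ((lv Zstar Zsub N : ℤ) : ℚ)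
                = ((2*(d:ℤ) + e - 2*(lv Zstar Zsub N) : ℤ) : ℚ) by push_cast; push_cast at hz; linarith]
            exact_mod_cast hzpos
          exact mul_nonneg hpos (sq_nonneg _)
        · have : g N = 0 := by rw [hg]; simp only [if_neg hlvN]
          rw [this]; simp
      have hsum_zero : ∑ N : Finset α, ((Zstar.card : ℚ) - (Zsub.card : ℚ)
          - 2 * ((lv Zstar Zsub N : ℤ) : ℚ)) * (g N)^2 = 0 := by
        have hle : ∑ N : Finset α, ((Zstar.card : ℚ) - (Zsub.card : ℚ)
            - 2 * ((lv Zstar Zsub N : ℤ) : ℚ)) * (g N)^2 ≤ 0 := by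
          rw [hUzero] at hnorm; linarith
        have hge := Finset.sum_nonneg hterm_nn
        linarith
      have hterms := (Finset.sum_eq_zero_iff_of_nonneg hterm_nn).mp hsum_zero
      -- conclude level c-1 vanishes
      intro N hN
      have hlvN : lv Zstar Zsub N = c - 1 := by omega
      have := hterms N (Finset.mem_univ N)
      have hcoefpos : ((Zstar.card : ℚ) - (Zsub.card : ℚ)
          - 2 * ((lv Zstar Zsub N : ℤ) : ℚ)) ≠ 0 := by
        have hz : (Zstar.card : ℚ) - (Zsub.card : ℚ) - 2*((lv Zstar Zsub N : ℤ):ℚ)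
            = ((2*(d:ℤ) + e - 2*(lv Zstar Zsub N) : ℤ) : ℚ) := by
          have : ((Zstar.card:ℤ):ℚ) - ((Zsub.card:ℤ):ℚ) = ((2 * (d:ℤ) + e : ℤ) : ℚ) := by
            exact_mod_cast congrArg (fun t : ℤ => (t : ℚ)) hze
          push_cast at this ⊢
          linarith
        rw [hz]
        have : (2*(d:ℤ) + e - 2*(lv Zstar Zsub N)) ≠ 0 := by rw [hlvN]; omega
        exact_mod_cast fun hh => this (by exact_mod_cast hh)
      have hg2 : (g N)^2 = 0 := by
        rcases mul_eq_zero.mp this with h | h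
        · exact absurd h hcoefpos
        · exact h
      have hgN : g N = 0 := by
        have := sq_eq_zero_iff.mp hg2
        exact this
      have h' : (if lv Zstar Zsub N = c - 1 then Ff w N else 0) = 0 := by
        simpa [hg] using hgN
      rwa [if_pos hlvN] at h'
  -- all levels vanish
  have hlow : ∀ N : Finset α, lv Zstar Zsub N ≤ m + 1 → Ff w N = 0 := by
    intro N hN
    have hnn : (0:ℤ) ≤ m + 1 - lv Zstar Zsub N := by omega
    have := (main (m + 1 - lv Zstar Zsub N).toNat).1 N
    apply this
    rw [Int.toNat_of_nonneg hnn]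
    ring
  have hall : ∀ N : Finset α, Ff w N = 0 := by
    intro N
    by_cases hN : lv Zstar Zsub N ≤ m + 1
    · exact hlow N hN
    · have h1 : lv Zstar Zsub (Finset.univ \ N) ≤ m + 1 := by
        rw [hlvcompl N]; omega
      have h2 := hlow _ h1
      rw [hcompl N] at h2
      exact (mul_eq_zero.mp h2).resolve_left hne
  -- invert
  intro M
  have hinv := inversion w M
  have hz : ∑ N : Finset α, (-1:ℚ) ^ ((N ∩ M).card) * Ff w N = 0 :=
    Finset.sum_eq_zero (fun N _ => by rw [hall N, mul_zero])
  rw [hz] at hinv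
  have hcard : ((Fintype.card (Finset α)) : ℚ) ≠ 0 := by
    have : 0 < Fintype.card (Finset α) := Fintype.card_pos
    exact_mod_cast this.ne'
  exact (mul_eq_zero.mp hinv.symm).resolve_left hcard

end Main
end Stmt1Aux

theorem stmt_1 {α : Type*} [DecidableEq α] [Fintype α]
    (Zstar Zsub : Finset α) (hdisj : Disjoint Zstar Zsub)
    (hunion : Zstar ∪ Zsub = Finset.univ)
    (z z' d : ℕ) (d' : ℤ)
    (hz : Zstar.card = z) (hz' : Zsub.card = z')
    (hdz : d ≤ z)
    (hpm : (z : ℤ) - d = (z' : ℤ) + d + 1 ∨ (z : ℤ) - d = (z' : ℤ) + d - 1)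
    (hd'1 : -(z' : ℤ) ≤ d') (hd'2 : d' ≤ (z : ℤ))
    (hd'd : d' = (d : ℤ)) :
    IsUnit (Matrix.of fun
        (N M : {M : Finset α // ((M ∩ Zstar).card : ℤ) = ((M ∩ Zsub).card : ℤ) + (d : ℤ)}) =>
        ((-1 : ℚ)) ^ ((N.1 ∩ M.1).card)) := by
  classical
  by_contra hnotunit
  rw [Matrix.isUnit_iff_isUnit_det, isUnit_iff_ne_zero, not_not] at hnotunit
  obtain ⟨vv, hv0, hvker⟩ := Matrix.exists_mulVec_eq_zero_iff.mpr hnotunit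
  obtain ⟨e, he, hze⟩ : ∃ e : ℤ, (e = 1 ∨ e = -1)
      ∧ (Zstar.card : ℤ) - (Zsub.card : ℤ) = 2 * d + e := by
    rcases hpm with h | h
    · exact ⟨1, Or.inl rfl, by rw [hz, hz']; omega⟩
    · exact ⟨-1, Or.inr rfl, by rw [hz, hz']; omega⟩
  set w : Finset α → ℚ := fun M =>
    if h : ((M ∩ Zstar).card : ℤ) = ((M ∩ Zsub).card : ℤ) + (d : ℤ) then
      vv ⟨M, h⟩ else 0 with hwdef
  have hw : ∀ M, w M ≠ 0 → ((M ∩ Zstar).card : ℤ) = ((M ∩ Zsub).card : ℤ) + (d : ℤ) := by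
    intro M hM
    by_contra h
    apply hM
    rw [hwdef]
    simp only [dif_neg h]
  have hker : ∀ N : Finset α, Stmt1Aux.lv Zstar Zsub N = (d:ℤ) → Stmt1Aux.Ff w N = 0 := by
    intro N hN
    have hNP : ((N ∩ Zstar).card : ℤ) = ((N ∩ Zsub).card : ℤ) + (d : ℤ) := by
      rw [Stmt1Aux.lv] at hN; omega
    have hrow := congrFun hvker ⟨N, hNP⟩
    rw [Matrix.mulVec, Pi.zero_apply] at hrow
    rw [Stmt1Aux.Ff]
    have h1 : ∑ M ∈ Finset.univ.filter
          (fun M : Finset α => ((M ∩ Zstar).card : ℤ) = ((M ∩ Zsub).card : ℤ) + (d : ℤ)),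
          (-1:ℚ) ^ ((N ∩ M).card) * w M
        = ∑ M : Finset α, (-1:ℚ) ^ ((N ∩ M).card) * w M := by
      refine Finset.sum_filter_of_ne (fun M _ hM => ?_)
      refine hw M (fun h0 => hM ?_)
      rw [h0, mul_zero]
    have h2 : ∑ M ∈ Finset.univ.filter
          (fun M : Finset α => ((M ∩ Zstar).card : ℤ) = ((M ∩ Zsub).card : ℤ) + (d : ℤ)),
          (-1:ℚ) ^ ((N ∩ M).card) * w M
        = ∑ j : {M : Finset α // ((M ∩ Zstar).card : ℤ) = ((M ∩ Zsub).card : ℤ) + (d : ℤ)},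
            (-1:ℚ) ^ ((N ∩ j.1).card) * w j.1 :=
      Finset.sum_subtype _ (fun x => by simp) (fun M => (-1:ℚ) ^ ((N ∩ M).card) * w M)
    have h3 : ∀ j : {M : Finset α // ((M ∩ Zstar).card : ℤ) = ((M ∩ Zsub).card : ℤ) + (d : ℤ)},
        (-1:ℚ) ^ ((N ∩ j.1).card) * w j.1 = (-1:ℚ) ^ ((N ∩ j.1).card) * vv j := by
      intro j
      rw [hwdef]
      simp only [dif_pos j.2, Subtype.coe_eta]
    have h4 : ∑ j : {M : Finset α // ((M ∩ Zstar).card : ℤ) = ((M ∩ Zsub).card : ℤ) + (d : ℤ)},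
        (-1:ℚ) ^ ((N ∩ j.1).card) * vv j = 0 := by
      rw [dotProduct] at hrow
      simpa using hrow
    rw [← h1, h2, Finset.sum_congr rfl (fun j _ => h3 j), h4]
  have hzero := Stmt1Aux.kernel_trivial Zstar Zsub hdisj hunion d e he hze w hw hker
  apply hv0
  funext x
  have := hzero x.1
  rw [hwdef] at this
  simp only [dif_pos x.2] at this
  rw [Pi.zero_apply, ← this]
end

section
/- Let z be a natural number and k an integer with k ≤ z + 1, and set m = ⌊(z − k + 1)/2⌋ (a natural number). Then ∑_{l=0}^{z} (−1)^l C(z, l) · C(z+1, l + k) = (−1)^m · C(z, m). Moreover, if k ≥ z + 2 the left-hand side equals 0. -/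
/-!
By the symmetry of binomial coefficients the sum is the coefficient of `X ^ (z + 1 - k)` in
`(1 - X) ^ z * (1 + X) ^ (z + 1) = (1 - X ^ 2) ^ z * (1 + X)`, and the coefficient of `X ^ n`
in the right-hand side is `(-1) ^ ⌊n / 2⌋ * C(z, ⌊n / 2⌋)`.
-/

/-- Binomial coefficient `C(m, a)` with an integer lower argument: it is `0`
unless `0 ≤ a`, and equals the usual binomial coefficient otherwise
(which is itself `0` when `a > m`). -/
def intChoose (m : ℕ) (a : ℤ) : ℤ := if 0 ≤ a then (m.choose a.toNat : ℤ) else 0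

open Polynomial Finset

theorem intChoose_eq_zero_of_lt {m : ℕ} {a : ℤ} (h : (m : ℤ) < a) : intChoose m a = 0 := by
  rw [intChoose, if_pos (by omega), Nat.choose_eq_zero_of_lt (by omega), Nat.cast_zero]

theorem intChoose_add_sub (m n l : ℕ) :
    intChoose m (l + (m - n : ℤ)) = if l ≤ n then (m.choose (n - l) : ℤ) else 0 := by
  split_ifs with hl
  · by_cases hnl : n - l ≤ m
    · rw [intChoose, if_pos (by omega), ← Nat.choose_symm hnl]
      congr 2; omega
    · rw [intChoose, if_neg (by omega), Nat.choose_eq_zero_of_lt (by omega), Nat.cast_zero]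
  · exact intChoose_eq_zero_of_lt (by omega)

theorem Polynomial.coeff_one_sub_X_pow {R : Type*} [CommRing R] (n k : ℕ) :
    ((1 - X : R[X]) ^ n).coeff k = (-1) ^ k * n.choose k := by
  have hterm (b : ℕ) : ((-X : R[X]) ^ b * 1 ^ (n - b) * (n.choose b : R[X])).coeff k
      = if k = b then (-1 : R) ^ k * n.choose k else 0 := by
    rw [neg_pow, one_pow, mul_one, ← C_eq_natCast, coeff_mul_C, ← C_1, ← C_neg, ← C_pow,
      coeff_C_mul_X_pow]
    split_ifs with h <;> simp [h]
  rw [sub_eq_neg_add, add_pow, finsetSum_coeff]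
  simp only [hterm, Finset.sum_ite_eq, mem_range]
  split_ifs with hk
  · rfl
  · simp [Nat.choose_eq_zero_of_lt (by omega : n < k)]

theorem Polynomial.coeff_mul_eq_sum_range {R : Type*} [Semiring R] (p q : R[X]) {N : ℕ}
    (hp : p.natDegree < N) (d : ℕ) :
    (p * q).coeff d = ∑ l ∈ range N, p.coeff l * if l ≤ d then q.coeff (d - l) else 0 := by
  conv_lhs => rw [p.as_sum_range' N hp]
  simp [Finset.sum_mul, ← C_mul_X_pow_eq_monomial, mul_assoc, coeff_X_pow_mul']

theorem Polynomial.coeff_expand_two_mul_one_add_X {R : Type*} [CommSemiring R] (f : R[X])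
    (n : ℕ) : (expand R 2 f * (1 + X)).coeff n = f.coeff (n / 2) := by
  rw [mul_add, mul_one, ← pow_one X, coeff_add, coeff_mul_X_pow', coeff_expand two_pos,
    coeff_expand two_pos]
  obtain ⟨i, rfl | rfl⟩ := Nat.even_or_odd' n
  · rcases i with _ | i
    · simp
    · simp [show ¬ 2 ∣ 2 * (i + 1) - 1 by omega]
  · simp [show ¬ 2 ∣ 2 * i + 1 by omega, show (2 * i + 1) / 2 = i by omega]

theorem Polynomial.coeff_one_sub_X_pow_mul_one_add_X_pow_succ {R : Type*} [CommRing R]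
    (z n : ℕ) :
    ((1 - X : R[X]) ^ z * (1 + X) ^ (z + 1)).coeff n = (-1 : R) ^ (n / 2) * z.choose (n / 2) := by
  have hfactor : (1 - X : R[X]) ^ z * (1 + X) ^ (z + 1) = expand R 2 ((1 - X) ^ z) * (1 + X) := by
    rw [map_pow, map_sub, map_one, expand_X, pow_succ, ← mul_assoc, ← mul_pow]
    ring
  rw [hfactor, coeff_expand_two_mul_one_add_X, coeff_one_sub_X_pow]

theorem sum_mul_intChoose_eq_coeff (z m n : ℕ) :
    ∑ l ∈ range (z + 1), (-1 : ℤ) ^ l * z.choose l * intChoose m (l + (m - n : ℤ))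
      = ((1 - X : ℤ[X]) ^ z * (1 + X) ^ m).coeff n := by
  have hdeg : ((1 - X : ℤ[X]) ^ z).natDegree < z + 1 := Nat.lt_succ_of_le (by compute_degree)
  rw [coeff_mul_eq_sum_range _ _ hdeg]
  refine sum_congr rfl fun l _ => ?_
  rw [intChoose_add_sub, coeff_one_sub_X_pow]
  split_ifs <;> simp [coeff_one_add_X_pow]

theorem stmt_3 (z : ℕ) (k : ℤ) :
    (k ≤ (z : ℤ) + 1 →
      ∑ l ∈ Finset.range (z + 1),
          (-1 : ℤ) ^ l * (z.choose l : ℤ) * intChoose (z + 1) ((l : ℤ) + k)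
        = (-1 : ℤ) ^ (((z : ℤ) - k + 1).toNat / 2)
            * (z.choose (((z : ℤ) - k + 1).toNat / 2) : ℤ)) ∧
    ((z : ℤ) + 2 ≤ k →
      ∑ l ∈ Finset.range (z + 1),
          (-1 : ℤ) ^ l * (z.choose l : ℤ) * intChoose (z + 1) ((l : ℤ) + k) = 0) := by
  refine ⟨fun hk => ?_, fun hk => ?_⟩
  · obtain ⟨n, rfl⟩ : ∃ n : ℕ, k = ((z + 1 : ℕ) : ℤ) - n :=
      ⟨((z : ℤ) - k + 1).toNat, by omega⟩
    have hn : ((z : ℤ) - (((z + 1 : ℕ) : ℤ) - n) + 1).toNat = n := by omega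
    rw [hn, sum_mul_intChoose_eq_coeff, coeff_one_sub_X_pow_mul_one_add_X_pow_succ (R := ℤ)]
  · exact sum_eq_zero fun l _ => by rw [intChoose_eq_zero_of_lt (by push_cast; omega), mul_zero]
end

section
/- Let z be a natural number and d' an integer with −(z+1) ≤ d' ≤ z. Then ∑_{l=0}^{z} (−1)^l C(z, l) · C(z+1, l − d') ≠ 0. -/
/-!
With `k = z + 1 + d'`, the sum is the coefficient of `X ^ k` in
`(1 - X) ^ z * (1 + X) ^ (z + 1) = (1 - X ^ 2) ^ z * (1 + X)`, which is
`(-1) ^ ⌊k/2⌋ * C(z, ⌊k/2⌋)`; the range of `d'` is exactly what makes `0 ≤ ⌊k/2⌋ ≤ z`.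
-/

open Polynomial Finset

lemma intChoose_sub_eq_ite {m k : ℕ} {d : ℤ} (hk : (k : ℤ) = m + d) (l : ℕ) :
    intChoose m ((l : ℤ) - d) = if l ≤ k then (m.choose (k - l) : ℤ) else 0 := by
  unfold intChoose
  split_ifs with hl hkl hkl
  · rw [show ((l : ℤ) - d).toNat = m - (k - l) by omega, Nat.choose_symm (by omega)]
  · rw [Nat.choose_eq_zero_of_lt (by omega : m < ((l : ℤ) - d).toNat), Nat.cast_zero]
  · rw [Nat.choose_eq_zero_of_lt (by omega), Nat.cast_zero]
  · rfl

theorem Finset.sum_range_mul_ite_le {R : Type*} [NonUnitalNonAssocSemiring R] {z : ℕ}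
    (k : ℕ) (f g : ℕ → R) (hf : ∀ l, z < l → f l = 0) :
    ∑ l ∈ range (z + 1), f l * (if l ≤ k then g l else 0) = ∑ l ∈ range (k + 1), f l * g l := by
  simp only [mul_ite, mul_zero, ← sum_filter]
  refine sum_subset (fun l => by simp only [mem_filter, mem_range]; omega) fun l hl hl' => ?_
  rw [hf l (by simp only [mem_range, mem_filter] at hl hl'; omega), zero_mul]

namespace Polynomial

variable {R : Type*}

theorem coeff_one_sub_X_pow_s4 [CommRing R] (n k : ℕ) :
    ((1 - X : R[X]) ^ n).coeff k = (-1) ^ k * n.choose k := by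
  have : (1 - X : R[X]) ^ n = ((1 + X) ^ n).comp (C (-1) * X) := by
    rw [pow_comp, add_comp, one_comp, X_comp, C_neg, C_1, neg_one_mul, sub_eq_add_neg]
  rw [this, comp_C_mul_X_coeff, coeff_one_add_X_pow, mul_comm]

theorem coeff_expand_two_mul_one_add_X_s4 [CommSemiring R] (q : R[X]) (k : ℕ) :
    (expand R 2 q * (1 + X)).coeff k = q.coeff (k / 2) := by
  rw [mul_add, mul_one, coeff_add]
  obtain ⟨j, rfl | rfl⟩ := Nat.even_or_odd' k
  · rw [coeff_expand_mul' two_pos]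
    rcases j with _ | i
    · simp
    · rw [show 2 * (i + 1) = 2 * i + 1 + 1 by ring, coeff_mul_X, coeff_expand two_pos,
        if_neg (by omega), add_zero]
      congr 1; omega
  · rw [coeff_mul_X, coeff_expand_mul' two_pos, coeff_expand two_pos, if_neg (by omega), zero_add]
    congr 1; omega

end Polynomial

theorem sum_neg_one_pow_mul_choose_mul_choose_succ (z k : ℕ) :
    ∑ l ∈ range (k + 1), (-1 : ℤ) ^ l * z.choose l * (z + 1).choose (k - l)
      = (-1) ^ (k / 2) * z.choose (k / 2) := by
  have hfactor : (1 - X : ℤ[X]) ^ z * (1 + X) ^ (z + 1) = expand ℤ 2 ((1 - X) ^ z) * (1 + X) := by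
    rw [map_pow, map_sub, map_one, expand_X, show (1 - X ^ 2 : ℤ[X]) = (1 - X) * (1 + X) by ring,
      mul_pow, pow_succ, mul_assoc]
  calc ∑ l ∈ range (k + 1), (-1 : ℤ) ^ l * z.choose l * (z + 1).choose (k - l)
      = ((1 - X : ℤ[X]) ^ z * (1 + X) ^ (z + 1)).coeff k := by
        simp only [coeff_mul, Nat.sum_antidiagonal_eq_sum_range_succ_mk, coeff_one_sub_X_pow_s4,
          coeff_one_add_X_pow]
    _ = (-1) ^ (k / 2) * z.choose (k / 2) := by
        rw [hfactor, coeff_expand_two_mul_one_add_X_s4, coeff_one_sub_X_pow_s4]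

theorem stmt_4 (z : ℕ) (d' : ℤ) (h1 : -((z : ℤ) + 1) ≤ d') (h2 : d' ≤ (z : ℤ)) :
    ∑ l ∈ Finset.range (z + 1),
        (-1 : ℤ) ^ l * (z.choose l : ℤ) * intChoose (z + 1) ((l : ℤ) - d') ≠ 0 := by
  obtain ⟨k, hk⟩ : ∃ k : ℕ, (k : ℤ) = (z + 1 : ℕ) + d' := ⟨_, Int.toNat_of_nonneg (by omega)⟩
  have hkz : k / 2 ≤ z := by omega
  rw [sum_congr rfl fun l _ => by rw [intChoose_sub_eq_ite hk l],
    sum_range_mul_ite_le k _ _ fun l hl => by rw [Nat.choose_eq_zero_of_lt hl]; simp,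
    sum_neg_one_pow_mul_choose_mul_choose_succ]
  exact mul_ne_zero (pow_ne_zero _ (by norm_num)) (Nat.cast_ne_zero.mpr (Nat.choose_pos hkz).ne')
end

section
/- Let z be a natural number and 0 ≤ l ≤ z. In the polynomial (X − 1)^z · (X + 1)^{z+1} with integer coefficients, the coefficients of X^{2l} and of X^{2l+1} are equal, and both are equal to (−1)^{z−l} · C(z, l). -/
open Polynomial Finset

lemma aux_coeff (z n : ℕ) : ((X ^ 2 - 1 : Polynomial ℤ) ^ z).coeff n =
    ∑ k ∈ Finset.range (z + 1),
      ((-1 : ℤ) ^ (z - k) * (z.choose k : ℤ)) * (if 2 * k = n then 1 else 0) := by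
  have h : (X ^ 2 - 1 : Polynomial ℤ) = X ^ 2 + C (-1) := by simp only [map_neg, map_one]; ring
  rw [h, add_pow, finset_sum_coeff]
  refine Finset.sum_congr rfl fun k hk => ?_
  have : (X ^ 2 : Polynomial ℤ) ^ k * C (-1) ^ (z - k) * (z.choose k : Polynomial ℤ)
      = C ((-1 : ℤ) ^ (z - k) * (z.choose k : ℤ)) * X ^ (2 * k) := by
    rw [← C_pow, ← pow_mul, ← C_eq_natCast, mul_assoc, ← C_mul]
    ring
  rw [this, coeff_C_mul, coeff_X_pow]
  simp [mul_comm, eq_comm]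

lemma aux_even (z l : ℕ) (hl : l ≤ z) :
    ((X ^ 2 - 1 : Polynomial ℤ) ^ z).coeff (2 * l)
      = (-1 : ℤ) ^ (z - l) * (z.choose l : ℤ) := by
  rw [aux_coeff]
  rw [Finset.sum_eq_single l]
  · simp
  · intro k hk hne
    simp only [mul_ite, mul_one, mul_zero, ite_eq_right_iff]
    intro h
    exact absurd (by omega : k = l) hne
  · intro h
    exact absurd (Finset.mem_range.mpr (by omega)) h

lemma aux_odd (z l : ℕ) :
    ((X ^ 2 - 1 : Polynomial ℤ) ^ z).coeff (2 * l + 1) = 0 := by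
  rw [aux_coeff]
  apply Finset.sum_eq_zero
  intro k hk
  have : ¬ (2 * k = 2 * l + 1) := by omega
  simp [this]

open Polynomial in
theorem stmt_5 (z l : ℕ) (hl : l ≤ z) :
    ((X - 1) ^ z * (X + 1) ^ (z + 1) : Polynomial ℤ).coeff (2 * l)
        = (-1 : ℤ) ^ (z - l) * (z.choose l : ℤ) ∧
    ((X - 1) ^ z * (X + 1) ^ (z + 1) : Polynomial ℤ).coeff (2 * l + 1)
        = (-1 : ℤ) ^ (z - l) * (z.choose l : ℤ) := by
  have key : ((X - 1) ^ z * (X + 1) ^ (z + 1) : Polynomial ℤ)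
      = (X ^ 2 - 1) ^ z * X + (X ^ 2 - 1) ^ z := by
    have : ((X - 1) * (X + 1) : Polynomial ℤ) = X ^ 2 - 1 := by ring
    have h1 : ((X - 1) ^ z * (X + 1) ^ (z + 1) : Polynomial ℤ)
        = ((X - 1) * (X + 1)) ^ z * (X + 1) := by
      rw [mul_pow, pow_succ]; ring
    rw [h1, this, mul_add, mul_one]
  rw [key]
  constructor
  · rw [coeff_add]
    rcases Nat.eq_zero_or_pos l with rfl | hpos
    · rw [coeff_mul_X_zero, zero_add]
      simpa using aux_even z 0 (Nat.zero_le z)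
    · obtain ⟨m, rfl⟩ : ∃ m, l = m + 1 := ⟨l - 1, by omega⟩
      have h2 : 2 * (m + 1) = (2 * m + 1) + 1 := by ring
      rw [h2, coeff_mul_X, ← h2, aux_odd, aux_even z (m+1) hl, zero_add]
  · rw [coeff_add, coeff_mul_X, aux_even z l hl, aux_odd, add_zero]
end

section
/- Let M_0 be a subset of Z^* of cardinality d, let j be a natural number and d' an integer. Then ∑_N (−1)^{card(N ∩ M_0)} = C(z', j) · ∑_{k=0}^{d} (−1)^k C(d, k) · C(z − d, j + d' − k), where the first sum runs over all subsets N of Z with card(N ∩ Z_*) = j and card(N ∩ Z^*) = j + d' (equality of integers). -/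
/-!
Writing `N ⊆ Z` as `A ∪ B` with `A ⊆ Z^*` and `B ⊆ Z_*`, neither the sign nor the condition on `A`
involves `B`, so the sum factors as `C(z', j)` times a signed count of the `A ⊆ Z^*` with
`|A| = j + d'`. Splitting `A` once more into `A ∩ M₀` of size `k`, contributing `(-1)^k C(d, k)`,
and a subset of `Z^* \ M₀` of size `j + d' - k` gives the alternating sum.
-/

open Finset

lemma Finset.sum_powerset_union_of_disjoint {α β : Type*} [DecidableEq α] [AddCommMonoid β]
    {S T : Finset α} (h : Disjoint S T) (g : Finset α → Finset α → β) :
    ∑ N ∈ (S ∪ T).powerset, g (N ∩ S) (N ∩ T) = ∑ A ∈ S.powerset, ∑ B ∈ T.powerset, g A B := by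
  rw [← sum_product']
  refine sum_nbij' (fun N ↦ (N ∩ S, N ∩ T)) (fun p ↦ p.1 ∪ p.2) ?_ ?_ ?_ ?_ (fun _ _ ↦ rfl)
  · intro N _
    simp [inter_subset_right]
  · rintro ⟨A, B⟩ hAB
    simp only [mem_product, mem_powerset] at hAB ⊢
    exact union_subset_union hAB.1 hAB.2
  · intro N hN
    simp only [mem_powerset] at hN
    rw [← inter_union_distrib_left, inter_eq_left.mpr hN]
  · rintro ⟨A, B⟩ hAB
    simp only [mem_product, mem_powerset] at hAB
    rw [union_inter_distrib_right, union_inter_distrib_right, inter_eq_left.mpr hAB.1,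
      inter_eq_left.mpr hAB.2, disjoint_iff_inter_eq_empty.mp (h.mono_left hAB.1),
      disjoint_iff_inter_eq_empty.mp (h.symm.mono_left hAB.2), union_empty, empty_union]

lemma Finset.card_filter_powerset_intCast_card_eq {α : Type*} (s : Finset α) (t : ℤ) :
    (#{B ∈ s.powerset | (#B : ℤ) = t} : ℤ) = intChoose #s t := by
  unfold intChoose
  split_ifs with ht
  · have hcard : ∀ B : Finset α, (#B : ℤ) = t ↔ #B = t.toNat := fun B ↦ by omega
    simp_rw [hcard, ← powersetCard_eq_filter, card_powersetCard]
  · rw [filter_false_of_mem fun B _ ↦ by omega, card_empty, Nat.cast_zero]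

lemma Finset.sum_powerset_neg_one_pow_card_inter {α : Type*} [DecidableEq α]
    {S M : Finset α} (hM : M ⊆ S) (n : ℤ) :
    ∑ A ∈ S.powerset, (if (#A : ℤ) = n then (-1 : ℤ) ^ #(A ∩ M) else 0)
      = ∑ k ∈ range (#M + 1), (-1 : ℤ) ^ k * (#M).choose k * intChoose (#S - #M) (n - k) := by
  have hsplit : S = M ∪ (S \ M) := (union_sdiff_of_subset hM).symm
  have hcard : ∀ A ∈ S.powerset, #A = #(A ∩ M) + #(A ∩ (S \ M)) := fun A hA ↦ by
    rw [← card_union_of_disjoint (disjoint_sdiff.mono inter_subset_right inter_subset_right),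
      ← inter_union_distrib_left, ← hsplit, inter_eq_left.mpr (mem_powerset.mp hA)]
  calc ∑ A ∈ S.powerset, (if (#A : ℤ) = n then (-1 : ℤ) ^ #(A ∩ M) else 0)
      = ∑ A ∈ S.powerset, (-1 : ℤ) ^ #(A ∩ M) *
          (if (#(A ∩ (S \ M)) : ℤ) = n - #(A ∩ M) then 1 else 0) := by
        refine sum_congr rfl fun A hA ↦ ?_
        simp only [hcard A hA, Nat.cast_add, eq_sub_iff_add_eq', mul_ite, mul_one, mul_zero]
    _ = ∑ A₁ ∈ M.powerset, (-1 : ℤ) ^ #A₁ * intChoose (#S - #M) (n - #A₁) := by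
        have hdecomp := sum_powerset_union_of_disjoint (disjoint_sdiff : Disjoint M (S \ M))
          (fun A₁ A₂ ↦ (-1 : ℤ) ^ #A₁ * if (#A₂ : ℤ) = n - #A₁ then 1 else 0)
        rw [← hsplit] at hdecomp
        rw [hdecomp]
        refine sum_congr rfl fun A₁ _ ↦ ?_
        rw [← mul_sum, sum_boole, card_filter_powerset_intCast_card_eq, card_sdiff_of_subset hM]
    _ = ∑ k ∈ range (#M + 1), (-1 : ℤ) ^ k * (#M).choose k * intChoose (#S - #M) (n - k) := by
        rw [sum_powerset]
        refine sum_congr rfl fun k _ ↦ ?_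
        rw [sum_powersetCard k M (fun k ↦ (-1 : ℤ) ^ k * intChoose (#S - #M) (n - k)),
          nsmul_eq_mul]
        ring

theorem stmt_6 {α : Type*} [DecidableEq α] [Fintype α]
    (Zstar Zsub : Finset α) (hdisj : Disjoint Zstar Zsub)
    (hunion : Zstar ∪ Zsub = Finset.univ)
    (z z' : ℕ) (hz : Zstar.card = z) (hz' : Zsub.card = z')
    (M0 : Finset α) (hM0 : M0 ⊆ Zstar) (d : ℕ) (hd : M0.card = d)
    (j : ℕ) (d' : ℤ) :
    ∑ N ∈ Finset.univ.filter (fun N : Finset α =>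
        (N ∩ Zsub).card = j ∧ ((N ∩ Zstar).card : ℤ) = (j : ℤ) + d'),
      (-1 : ℤ) ^ ((N ∩ M0).card)
      = (z'.choose j : ℤ) *
          ∑ k ∈ Finset.range (d + 1),
            (-1 : ℤ) ^ k * (d.choose k : ℤ) * intChoose (z - d) ((j : ℤ) + d' - k) := by
  have hsign : ∀ N : Finset α, N ∩ M0 = N ∩ Zstar ∩ M0 := fun N ↦ by
    rw [inter_assoc, inter_eq_right.mpr hM0]
  have hsub : ∑ B ∈ Zsub.powerset, (if #B = j then (1 : ℤ) else 0) = z'.choose j := by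
    rw [sum_boole, ← powersetCard_eq_filter, card_powersetCard, hz']
  rw [sum_filter, ← powerset_univ, ← hunion]
  calc ∑ N ∈ (Zstar ∪ Zsub).powerset,
        (if #(N ∩ Zsub) = j ∧ (#(N ∩ Zstar) : ℤ) = j + d' then (-1 : ℤ) ^ #(N ∩ M0) else 0)
      = ∑ A ∈ Zstar.powerset, ∑ B ∈ Zsub.powerset,
          (if (#A : ℤ) = j + d' then (-1 : ℤ) ^ #(A ∩ M0) else 0) *
            (if #B = j then 1 else 0) := by
        rw [← sum_powerset_union_of_disjoint hdisj]
        refine sum_congr rfl fun N _ ↦ ?_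
        rw [hsign, ite_and, mul_ite, mul_one, mul_zero]
    _ = _ := by
        rw [← sum_mul_sum, hsub, mul_comm, sum_powerset_neg_one_pow_card_inter hM0, hz, hd]
end

section
/- Let M_0 be a subset of Z^* of cardinality d (so d ≤ z), and let d' be an integer. Then ∑_N (−1)^{card(N ∩ Z_*) + card(N ∩ M_0)} = (−1)^{d'} · ∑_{l=0}^{z−d} (−1)^l C(z − d, l) · C(z' + d, l + d − d'), where the first sum runs over all subsets N of Z with card(N ∩ Z^*) = card(N ∩ Z_*) + d' (equality of integers). -/
open Finset
open scoped symmDiff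

theorem intChoose_symm (m : ℕ) (a : ℤ) : intChoose m (m - a) = intChoose m a := by
  unfold intChoose
  split_ifs with h₁ h₂ h₂
  · rw [show (m - a).toNat = m - a.toNat by omega, Nat.choose_symm (by omega)]
  · rw [Nat.choose_eq_zero_of_lt (by omega), Nat.cast_zero]
  · rw [Nat.choose_eq_zero_of_lt (by omega), Nat.cast_zero]
  · rfl

theorem sum_range_choose_mul_ite_natCast_eq (m : ℕ) (a : ℤ) (u : ℤ → ℤ) :
    ∑ j ∈ range (m + 1), (m.choose j : ℤ) * (if (j : ℤ) = a then u j else 0)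
      = intChoose m a * u a := by
  simp_rw [mul_ite, mul_zero]
  unfold intChoose
  split_ifs with ha
  · lift a to ℕ using ha
    simp only [Nat.cast_inj, sum_ite_eq', mem_range, Int.toNat_natCast]
    split_ifs with hm
    · rfl
    · rw [Nat.choose_eq_zero_of_lt (by omega), Nat.cast_zero, zero_mul]
  · rw [zero_mul]
    exact sum_eq_zero fun j _ => if_neg (by omega)

section
variable {α : Type*} [DecidableEq α]

theorem Finset.sum_powerset_union_inter {M : Type*} [AddCommMonoid M] {s t : Finset α}
    (h : Disjoint s t) (f : Finset α → Finset α → M) :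
    ∑ N ∈ (s ∪ t).powerset, f (N ∩ s) (N ∩ t) = ∑ A ∈ s.powerset, ∑ B ∈ t.powerset, f A B := by
  rw [← sum_product']
  refine sum_nbij' (fun N => (N ∩ s, N ∩ t)) (fun p => p.1 ∪ p.2) ?_ ?_ ?_ ?_ fun _ _ => rfl
  · intro N _
    simp only [mem_product, mem_powerset]
    exact ⟨inter_subset_right, inter_subset_right⟩
  · rintro ⟨A, B⟩ hAB
    simp only [mem_product, mem_powerset] at hAB ⊢
    exact union_subset_union hAB.1 hAB.2
  · intro N hN
    simp only [mem_powerset] at hN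
    simp only [← inter_union_distrib_left, inter_eq_left.2 hN]
  · rintro ⟨A, B⟩ hAB
    simp only [mem_product, mem_powerset] at hAB
    simp only [union_inter_distrib_right, inter_eq_left.2 hAB.1, inter_eq_left.2 hAB.2,
      disjoint_iff_inter_eq_empty.1 (h.mono_left hAB.1),
      disjoint_iff_inter_eq_empty.1 (h.symm.mono_left hAB.2), union_empty, empty_union]

theorem Finset.sum_powerset_union_card_inter {M : Type*} [AddCommMonoid M] {s t : Finset α}
    (h : Disjoint s t) (f : ℕ → ℕ → M) :
    ∑ N ∈ (s ∪ t).powerset, f #(N ∩ s) #(N ∩ t)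
      = ∑ i ∈ range (#s + 1), (#s).choose i • ∑ j ∈ range (#t + 1), (#t).choose j • f i j := by
  rw [sum_powerset_union_inter h fun A B => f #A #B]
  simp_rw [sum_powerset_apply_card]
  exact sum_powerset_apply_card fun i => ∑ j ∈ range (#t + 1), (#t).choose j • f i j

theorem Finset.symmDiff_inter_of_disjoint {s t : Finset α} (h : Disjoint s t) (N : Finset α) :
    N ∆ t ∩ s = N ∩ s := by
  have := inf_symmDiff_distrib_right N t s
  rwa [inf_eq_inter, inf_eq_inter, inf_eq_inter, disjoint_iff_inter_eq_empty.1 h.symm,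
    ← bot_eq_empty, symmDiff_bot] at this

theorem Finset.card_symmDiff_inter_add_card_inter (N t : Finset α) :
    #(N ∆ t ∩ t) + #(N ∩ t) = #t := by
  have := inf_symmDiff_distrib_right N t t
  rw [inf_eq_inter, inf_eq_inter, inf_eq_inter, inter_self] at this
  rw [this, symmDiff_of_le inter_subset_right, card_sdiff_add_card_eq_card inter_subset_right]

theorem ite_card_symmDiff_inter_eq {Zstar Zsub M0 : Finset α} (hdisj : Disjoint Zstar Zsub)
    (hM0 : M0 ⊆ Zstar) (d' : ℤ) (N : Finset α) :
    (if (#(N ∆ Zsub ∩ Zstar) : ℤ) = #(N ∆ Zsub ∩ Zsub) + d' then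
        (-1 : ℤ) ^ (#(N ∆ Zsub ∩ Zsub) + #(N ∆ Zsub ∩ M0)) else 0)
      = if (#(N ∩ (M0 ∪ Zsub)) : ℤ) = #Zsub + d' - #(N ∩ (Zstar \ M0)) then
          ((#Zsub + #(N ∩ (M0 ∪ Zsub)) : ℤ).negOnePow : ℤ) else 0 := by
  have hsub := card_symmDiff_inter_add_card_inter N Zsub
  have hstar : #(N ∩ (Zstar \ M0)) + #(N ∩ M0) = #(N ∩ Zstar) := by
    rw [← card_union_of_disjoint, ← inter_union_distrib_left, sdiff_union_of_subset hM0]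
    exact disjoint_sdiff_self_left.mono inter_subset_right inter_subset_right
  have hM0sub : #(N ∩ (M0 ∪ Zsub)) = #(N ∩ M0) + #(N ∩ Zsub) := by
    rw [inter_union_distrib_left, card_union_of_disjoint]
    exact (hdisj.mono_left hM0).mono inter_subset_right inter_subset_right
  rw [symmDiff_inter_of_disjoint hdisj, symmDiff_inter_of_disjoint (hdisj.mono_left hM0),
    ← hstar, hM0sub]
  congr 1
  · exact propext (by omega)
  · rw [← Int.coe_negOnePow_natCast]
    congr 1
    rw [Int.negOnePow_eq_iff]
    exact ⟨-#(N ∩ Zsub), by push_cast; omega⟩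

end

theorem stmt_7 {α : Type*} [DecidableEq α] [Fintype α]
    (Zstar Zsub : Finset α) (hdisj : Disjoint Zstar Zsub)
    (hunion : Zstar ∪ Zsub = Finset.univ)
    (z z' : ℕ) (hz : Zstar.card = z) (hz' : Zsub.card = z')
    (M0 : Finset α) (hM0 : M0 ⊆ Zstar) (d : ℕ) (hd : M0.card = d)
    (d' : ℤ) :
    ∑ N ∈ Finset.univ.filter (fun N : Finset α =>
        ((N ∩ Zstar).card : ℤ) = ((N ∩ Zsub).card : ℤ) + d'),
      (-1 : ℤ) ^ ((N ∩ Zsub).card + (N ∩ M0).card)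
      = (d'.negOnePow : ℤ) *
          ∑ l ∈ Finset.range (z - d + 1),
            (-1 : ℤ) ^ l * ((z - d).choose l : ℤ) * intChoose (z' + d) ((l : ℤ) + d - d') := by
  subst hz hz' hd
  have hST : Disjoint (Zstar \ M0) (M0 ∪ Zsub) :=
    disjoint_union_right.2 ⟨disjoint_sdiff_self_left, hdisj.mono_left sdiff_subset⟩
  have hSTuniv : Zstar \ M0 ∪ (M0 ∪ Zsub) = univ := by
    rw [← union_assoc, sdiff_union_of_subset hM0, hunion]
  have hcardT : #(M0 ∪ Zsub) = #Zsub + #M0 := by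
    rw [card_union_of_disjoint (hdisj.mono_left hM0), add_comm]
  rw [sum_filter, ← Fintype.sum_equiv ((symmDiff_left_involutive Zsub).toPerm _) _ _
    fun N => (ite_card_symmDiff_inter_eq hdisj hM0 d' N).symm]
  rw [← powerset_univ, ← hSTuniv, sum_powerset_union_card_inter hST
    (fun i j => if (j : ℤ) = #Zsub + d' - i then ((#Zsub + j : ℤ).negOnePow : ℤ) else 0),
    card_sdiff_of_subset hM0, hcardT, mul_sum]
  simp only [nsmul_eq_mul,
    sum_range_choose_mul_ite_natCast_eq _ _ fun j => ((#Zsub + j : ℤ).negOnePow : ℤ)]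
  refine sum_congr rfl fun l _ => ?_
  rw [← intChoose_symm _ (l + #M0 - d'),
    show ((#Zsub + #M0 : ℕ) : ℤ) - (l + #M0 - d') = #Zsub + d' - l by push_cast; ring]
  have hsign : ((#Zsub + (#Zsub + d' - l) : ℤ).negOnePow : ℤ) = d'.negOnePow * (-1) ^ l := by
    rw [← Int.coe_negOnePow_natCast, ← Units.val_mul, ← Int.negOnePow_add]
    congr 1
    rw [Int.negOnePow_eq_iff]
    exact ⟨#Zsub - l, by ring⟩
  rw [hsign]
  ring
end

section
/- Let M_0 be a subset of Z^* of cardinality d, and let d' be an integer. Assume d ≤ z, z − d = z' + d + 1 or z − d = z' + d − 1, and −z' ≤ d' ≤ z. Then ∑_N (−1)^{card(N ∩ Z_*) + card(N ∩ M_0)} ≠ 0, where the sum runs over all subsets N of Z with card(N ∩ Z^*) = card(N ∩ Z_*) + d' (equality of integers). -/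
/-!
Replacing `N` by `T = N ∆ Z_*` turns the constraint into `#T = z' + d'` and the sign into
`(-1) ^ z' * (-1) ^ #(T ∩ (Z_* ∪ M₀))`, so the sum is, up to sign, the coefficient of
`X ^ (z' + d')` in `(1 - X) ^ (z' + d) * (1 + X) ^ (z - d)`. The two exponents differ by one,
so this polynomial is `±(1 ± X) * (X ^ 2 - 1) ^ m` with `2m + 1 = z + z'`, and each of its
coefficients up to degree `2m + 1` is a binomial coefficient up to sign.
-/

open Finset Polynomial
open scoped symmDiff

section SymmDiff

variable {α : Type*} [DecidableEq α]

theorem Finset.card_symmDiff_add_two_mul_card_inter (s t : Finset α) :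
    #(s ∆ t) + 2 * #(s ∩ t) = #s + #t := by
  rw [symmDiff_eq_sup_sdiff_inf, sup_eq_union, inf_eq_inter,
    card_sdiff_of_subset inter_subset_union, ← card_union_add_card_inter]
  have := card_le_card (inter_subset_union (s := s) (t := t))
  omega

theorem neg_one_pow_card_symmDiff {R : Type*} [Monoid R] [HasDistribNeg R] (s t : Finset α) :
    (-1 : R) ^ #(s ∆ t) = (-1) ^ #s * (-1) ^ #t := by
  rw [← pow_add, ← card_symmDiff_add_two_mul_card_inter, pow_add, pow_mul, neg_one_sq, one_pow,
    mul_one]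

theorem neg_one_pow_card_symmDiff_inter_union {R : Type*} [Monoid R] [HasDistribNeg R]
    {B M : Finset α} (hMB : Disjoint M B) (N : Finset α) :
    (-1 : R) ^ #((N ∆ B) ∩ (B ∪ M)) = (-1) ^ #B * (-1) ^ (#(N ∩ B) + #(N ∩ M)) := by
  have hinter : (N ∆ B) ∩ (B ∪ M) = (N ∩ B ∪ N ∩ M) ∆ B := by
    ext i
    simp only [mem_inter, mem_union, mem_symmDiff]
    tauto
  rw [hinter, neg_one_pow_card_symmDiff, ← pow_add, ← pow_add, add_comm,
    card_union_of_disjoint (hMB.symm.mono inter_subset_right inter_subset_right)]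

end SymmDiff

theorem neg_one_pow_card_mul_sum_eq_sum_card_eq {α R : Type*} [Fintype α] [DecidableEq α]
    [CommRing R] {A B M : Finset α} (hAB : Disjoint A B) (hU : A ∪ B = univ) (hMA : M ⊆ A)
    (d' : ℤ) {n : ℕ} (hn : (n : ℤ) = #B + d') :
    (-1 : R) ^ #B * ∑ N with (#(N ∩ A) : ℤ) = #(N ∩ B) + d',
        (-1) ^ (#(N ∩ B) + #(N ∩ M)) = ∑ T with #T = n, (-1) ^ #(T ∩ (B ∪ M)) := by
  have hcard (N : Finset α) : (#(N ∆ B) : ℤ) = #(N ∩ A) + #B - #(N ∩ B) := by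
    have hsplit : #(N ∩ A) + #(N ∩ B) = #N := by
      rw [← card_union_of_disjoint (hAB.mono inter_subset_right inter_subset_right),
        ← inter_union_distrib_left, hU, inter_univ]
    have := card_symmDiff_add_two_mul_card_inter N B
    omega
  rw [mul_sum]
  refine sum_nbij' (· ∆ B) (· ∆ B) (fun N hN => ?_) (fun T hT => ?_)
    (fun N _ => symmDiff_symmDiff_cancel_right B N) (fun T _ => symmDiff_symmDiff_cancel_right B T)
    (fun N _ => (neg_one_pow_card_symmDiff_inter_union (hAB.mono_left hMA) N).symm)
  · simp only [mem_filter, mem_univ, true_and] at hN ⊢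
    have := hcard N
    omega
  · simp only [mem_filter, mem_univ, true_and] at hT ⊢
    have := hcard (T ∆ B)
    rw [symmDiff_symmDiff_cancel_right] at this
    omega

theorem sum_card_eq_neg_one_pow_card_inter_eq_coeff {α R : Type*} [Fintype α] [DecidableEq α]
    [CommRing R] (S : Finset α) (n : ℕ) :
    ∑ T with #T = n, (-1 : R) ^ #(T ∩ S) = ((1 - X) ^ #S * (1 + X) ^ #Sᶜ : R[X]).coeff n := by
  set ε : α → R := fun i => if i ∈ S then -1 else 1
  have hprod : ((1 - X) ^ #S * (1 + X) ^ #Sᶜ : R[X]) = ∏ i, (1 + C (ε i) * X) := by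
    rw [← prod_mul_prod_compl S, ← prod_const, ← prod_const]
    congr 1 <;> refine prod_congr rfl fun i hi => ?_
    · simp [ε, hi, sub_eq_add_neg]
    · simp [ε, mem_compl.mp hi]
  have hterm (T : Finset α) : ∏ i ∈ T, C (ε i) * X = C ((-1 : R) ^ #(T ∩ S)) * X ^ #T := by
    rw [prod_mul_distrib, prod_const, ← map_prod, prod_ite_mem, prod_const]
  rw [hprod, prod_one_add, powerset_univ, finsetSum_coeff, sum_filter]
  refine sum_congr rfl fun T _ => ?_
  rw [hterm, coeff_C_mul_X_pow]
  exact if_congr eq_comm rfl rfl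

theorem coeff_X_sq_sub_one_pow {R : Type*} [CommRing R] (m k : ℕ) :
    ((X ^ 2 - 1 : R[X]) ^ m).coeff k =
      if Even k then (-1) ^ (m - k / 2) * (m.choose (k / 2) : R) else 0 := by
  have : (X ^ 2 - 1 : R[X]) = expand R 2 (X + C (-1)) := by simp [sub_eq_add_neg]
  rw [this, ← map_pow, coeff_expand two_pos, coeff_X_add_C_pow]
  simp only [even_iff_two_dvd]

theorem coeff_one_add_C_mul_X_mul_X_sq_sub_one_pow_ne_zero {c : ℤ} (hc : c ≠ 0) {m n : ℕ}
    (hn : n ≤ 2 * m + 1) : ((1 + C c * X) * (X ^ 2 - 1) ^ m : ℤ[X]).coeff n ≠ 0 := by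
  have hchoose {j : ℕ} (hj : j ≤ m) : (-1 : ℤ) ^ (m - j) * (m.choose j : ℤ) ≠ 0 :=
    mul_ne_zero (pow_ne_zero _ (by norm_num)) (by exact_mod_cast (Nat.choose_pos hj).ne')
  rcases n with _ | n
  · simp [coeff_X_sq_sub_one_pow]
  rw [add_mul, one_mul, coeff_add, mul_assoc, coeff_C_mul, coeff_X_mul,
    coeff_X_sq_sub_one_pow, coeff_X_sq_sub_one_pow]
  rcases Nat.even_or_odd n with hn' | hn'
  · rw [if_neg (by simpa [parity_simps] using hn'), if_pos hn', zero_add]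
    exact mul_ne_zero hc (hchoose (by omega))
  · rw [if_pos (by simpa [parity_simps] using hn'), if_neg (Nat.not_even_iff_odd.mpr hn'),
      mul_zero, add_zero]
    exact hchoose (by obtain ⟨k, rfl⟩ := hn'; omega)

theorem coeff_one_sub_X_pow_mul_one_add_X_pow_ne_zero {a b n : ℕ} (hab : a = b + 1 ∨ b = a + 1)
    (hn : n ≤ a + b) : ((1 - X) ^ a * (1 + X) ^ b : ℤ[X]).coeff n ≠ 0 := by
  have hsq : ((1 - X) * (1 + X) : ℤ[X]) = -1 * (X ^ 2 - 1) := by ring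
  obtain ⟨c, m, hc, hm, hpoly⟩ : ∃ (c : ℤ) (m : ℕ), c ≠ 0 ∧ a + b = 2 * m + 1 ∧
      ((1 - X) ^ a * (1 + X) ^ b : ℤ[X]) = C ((-1) ^ m) * ((1 + C c * X) * (X ^ 2 - 1) ^ m) := by
    rcases hab with rfl | rfl
    · refine ⟨-1, b, by norm_num, by ring, ?_⟩
      rw [pow_succ', mul_assoc, ← mul_pow, hsq, mul_pow]
      simp only [map_neg, map_one, map_pow]
      ring
    · refine ⟨1, a, one_ne_zero, by ring, ?_⟩
      rw [pow_succ', mul_left_comm, ← mul_pow, hsq, mul_pow]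
      simp only [map_neg, map_one, map_pow]
      ring
  rw [hpoly, coeff_C_mul]
  exact mul_ne_zero (pow_ne_zero _ (by norm_num))
    (coeff_one_add_C_mul_X_mul_X_sq_sub_one_pow_ne_zero hc (hm ▸ hn))

theorem stmt_8_general {α : Type*} [DecidableEq α] [Fintype α]
    (Zstar Zsub : Finset α) (hdisj : Disjoint Zstar Zsub)
    (hunion : Zstar ∪ Zsub = Finset.univ)
    (z z' : ℕ) (hz : Zstar.card = z) (hz' : Zsub.card = z')
    (M0 : Finset α) (hM0 : M0 ⊆ Zstar) (d : ℕ) (hd : M0.card = d)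
    (d' : ℤ)
    (hpm : (z : ℤ) - d = (z' : ℤ) + d + 1 ∨ (z : ℤ) - d = (z' : ℤ) + d - 1)
    (hd'1 : -(z' : ℤ) ≤ d') (hd'2 : d' ≤ (z : ℤ)) :
    ∑ N ∈ Finset.univ.filter (fun N : Finset α =>
        ((N ∩ Zstar).card : ℤ) = ((N ∩ Zsub).card : ℤ) + d'),
      (-1 : ℤ) ^ ((N ∩ Zsub).card + (N ∩ M0).card) ≠ 0 := by
  obtain ⟨n, hn⟩ : ∃ n : ℕ, (n : ℤ) = #Zsub + d' := ⟨(z' + d').toNat, by omega⟩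
  have hS : #(Zsub ∪ M0) = z' + d := by
    rw [card_union_of_disjoint (hdisj.mono_left hM0).symm, hz', hd]
  have hSc : #(Zsub ∪ M0) + #(Zsub ∪ M0)ᶜ = z + z' := by
    rw [card_add_card_compl, ← card_univ, ← hunion, card_union_of_disjoint hdisj, hz, hz']
  have key := neg_one_pow_card_mul_sum_eq_sum_card_eq (R := ℤ) hdisj hunion hM0 d' hn
  rw [sum_card_eq_neg_one_pow_card_inter_eq_coeff] at key
  exact right_ne_zero_of_mul
    (key ▸ coeff_one_sub_X_pow_mul_one_add_X_pow_ne_zero (by omega) (by omega))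

theorem stmt_8 {α : Type*} [DecidableEq α] [Fintype α]
    (Zstar Zsub : Finset α) (hdisj : Disjoint Zstar Zsub)
    (hunion : Zstar ∪ Zsub = Finset.univ)
    (z z' : ℕ) (hz : Zstar.card = z) (hz' : Zsub.card = z')
    (M0 : Finset α) (hM0 : M0 ⊆ Zstar) (d : ℕ) (hd : M0.card = d)
    (d' : ℤ)
    (hdz : d ≤ z)
    (hpm : (z : ℤ) - d = (z' : ℤ) + d + 1 ∨ (z : ℤ) - d = (z' : ℤ) + d - 1)
    (hd'1 : -(z' : ℤ) ≤ d') (hd'2 : d' ≤ (z : ℤ)) :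
    ∑ N ∈ Finset.univ.filter (fun N : Finset α =>
        ((N ∩ Zstar).card : ℤ) = ((N ∩ Zsub).card : ℤ) + d'),
      (-1 : ℤ) ^ ((N ∩ Zsub).card + (N ∩ M0).card) ≠ 0 :=
  stmt_8_general Zstar Zsub hdisj hunion z z' hz hz' M0 hM0 d hd d' hpm hd'1 hd'2
end

section
/- Let z ≥ 1 and let Z = {z_0, z_1, …, z_{2z}} be a set with 2z+1 distinct elements. For 1 ≤ i ≤ 2z define the subset f_i of Z by f_i = {z_0, …, z_i} if i is odd, and f_i = {z_0, …, z_{i−2}, z_i} if i is even. Then, in the 𝔽₂-vector space V of subsets of Z of even cardinality (with addition given by symmetric difference), the family (f_1, …, f_{2z}) is a basis, and the pairing ⟨M, N⟩ = card(M ∩ N) mod 2 satisfies: ⟨f_i, f_j⟩ = 1 if {i, j} = {2k−1, 2k} for some k, and ⟨f_i, f_j⟩ = 0 otherwise (in particular its Gram matrix in this basis is block diagonal with 2×2 blocks [[0,1],[1,0]]). -/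
open Finset

lemma card_symmDiff_mod (A B : Finset ℕ) : (symmDiff A B).card % 2 = (A.card + B.card) % 2 := by
  have h1 : symmDiff A B = (A ∪ B) \ (A ∩ B) := by
    ext k; simp [Finset.mem_symmDiff]; tauto
  have h2 : (A ∪ B).card + (A ∩ B).card = A.card + B.card := Finset.card_union_add_card_inter A B
  have h3 : (A ∩ B) ⊆ (A ∪ B) := (Finset.inter_subset_left).trans Finset.subset_union_left
  rw [h1, Finset.card_sdiff_of_subset (by simpa using h3)]
  have := Finset.card_le_card h3
  omega

lemma filter_symmDiff' (p : ℕ → Prop) [DecidablePred p] (A B : Finset ℕ) :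
    (symmDiff A B).filter p = symmDiff (A.filter p) (B.filter p) := by
  ext k; simp [Finset.mem_symmDiff, Finset.mem_filter]; tauto

lemma mem_fold_symmDiff (f : ℕ → Finset ℕ) (S : Finset ℕ) (k : ℕ) :
    k ∈ S.fold (fun M N : Finset ℕ => symmDiff M N) ∅ f ↔
      (S.filter (fun i => k ∈ f i)).card % 2 = 1 := by
  classical
  induction S using Finset.induction_on with
  | empty => simp
  | @insert a S ha ih =>
    rw [Finset.fold_insert ha, Finset.mem_symmDiff, Finset.filter_insert]
    by_cases h : k ∈ f a
    · rw [if_pos h, Finset.card_insert_of_notMem (fun hc => ha (Finset.mem_filter.mp hc).1)]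
      simp [h, ih]
      omega
    · rw [if_neg h]
      simp [h, ih]

lemma fold_symmDiff_hom (f : ℕ → Finset ℕ) (S T : Finset ℕ) :
    (symmDiff S T).fold (fun M N : Finset ℕ => symmDiff M N) ∅ f =
      symmDiff (S.fold (fun M N : Finset ℕ => symmDiff M N) ∅ f)
        (T.fold (fun M N : Finset ℕ => symmDiff M N) ∅ f) := by
  classical
  ext k
  rw [Finset.mem_symmDiff, mem_fold_symmDiff, mem_fold_symmDiff, mem_fold_symmDiff,
    filter_symmDiff']
  have := card_symmDiff_mod (S.filter (fun i => k ∈ f i)) (T.filter (fun i => k ∈ f i))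
  omega

section
variable {z : ℕ} {f : ℕ → Finset ℕ}
  (hfodd : ∀ i, 1 ≤ i → i ≤ 2 * z → Odd i → f i = Finset.range (i + 1))
  (hfeven : ∀ i, 1 ≤ i → i ≤ 2 * z → Even i → f i = Finset.range (i - 1) ∪ {i})

include hfodd hfeven

lemma f_subset' (i : ℕ) (h1 : 1 ≤ i) (h2 : i ≤ 2*z) : f i ⊆ Finset.range (i+1) := by
  rcases Nat.even_or_odd i with he | ho
  · rw [hfeven i h1 h2 he]
    intro k hk
    simp only [Finset.mem_range, Finset.mem_union, Finset.mem_singleton] at *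
    omega
  · rw [hfodd i h1 h2 ho]

lemma mem_f_self' (i : ℕ) (h1 : 1 ≤ i) (h2 : i ≤ 2*z) : i ∈ f i := by
  rcases Nat.even_or_odd i with he | ho
  · rw [hfeven i h1 h2 he]; simp
  · rw [hfodd i h1 h2 ho]; simp

lemma even_card_f' (i : ℕ) (h1 : 1 ≤ i) (h2 : i ≤ 2*z) : (f i).card % 2 = 0 := by
  rcases Nat.even_or_odd i with he | ho
  · rw [hfeven i h1 h2 he, Finset.card_union_of_disjoint (by simp)]
    simp only [Finset.card_range, Finset.card_singleton]
    rw [Nat.even_iff] at he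
    omega
  · rw [hfodd i h1 h2 ho]
    simp only [Finset.card_range]
    rw [Nat.odd_iff] at ho
    omega
end

section
variable {z : ℕ} {f : ℕ → Finset ℕ}
  (hfodd : ∀ i, 1 ≤ i → i ≤ 2 * z → Odd i → f i = Finset.range (i + 1))
  (hfeven : ∀ i, 1 ≤ i → i ≤ 2 * z → Even i → f i = Finset.range (i - 1) ∪ {i})

include hfodd hfeven

lemma fold_ne_empty' (S : Finset ℕ) (hS : S ⊆ Finset.Icc 1 (2*z)) (hne : S.Nonempty) :
    S.fold (fun M N : Finset ℕ => symmDiff M N) ∅ f ≠ ∅ := by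
  classical
  intro hc
  have hm := S.max'_mem hne
  set m := S.max' hne with hmdef
  have h1 : 1 ≤ m ∧ m ≤ 2*z := by simpa using hS hm
  have hmm : m ∈ S.fold (fun M N : Finset ℕ => symmDiff M N) ∅ f := by
    rw [mem_fold_symmDiff]
    have hfilt : S.filter (fun i => m ∈ f i) = {m} := by
      ext k
      simp only [Finset.mem_filter, Finset.mem_singleton]
      constructor
      · rintro ⟨hk, hmf⟩
        have hk2 : 1 ≤ k ∧ k ≤ 2*z := by simpa using hS hk
        have hsub := f_subset' hfodd hfeven k hk2.1 hk2.2 hmf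
        have hle := S.le_max' k hk
        simp only [Finset.mem_range] at hsub
        omega
      · rintro rfl
        exact ⟨hm, mem_f_self' hfodd hfeven m h1.1 h1.2⟩
    rw [hfilt]
    simp
  rw [hc] at hmm
  simp at hmm

lemma exists_rep' : ∀ n, n ≤ 2*z+1 → ∀ M : Finset ℕ, M ⊆ Finset.range n → M.card % 2 = 0 →
    ∃ S, S ⊆ Finset.Icc 1 (2*z) ∧ M = S.fold (fun M N : Finset ℕ => symmDiff M N) ∅ f := by
  intro n
  induction n with
  | zero =>
    intro _ M hM _
    refine ⟨∅, by simp, ?_⟩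
    have : M = ∅ := by
      rw [← Finset.subset_empty]
      simpa using hM
    simp [this]
  | succ n ih =>
    intro hn M hM hcard
    by_cases hmem : n ∈ M
    · have hn1 : 1 ≤ n := by
        rcases Nat.eq_zero_or_pos n with rfl | h
        · exfalso
          have : M = {0} := by
            apply Finset.Subset.antisymm
            · intro k hk; simpa using hM hk
            · simpa using hmem
          rw [this] at hcard
          simp at hcard
        · exact h
      have hn2 : n ≤ 2*z := by omega
      have hfs := f_subset' hfodd hfeven n hn1 hn2
      have hnself := mem_f_self' hfodd hfeven n hn1 hn2
      set M' := symmDiff M (f n) with hM'def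
      have hM'sub : M' ⊆ Finset.range n := by
        intro k hk
        rw [hM'def, Finset.mem_symmDiff] at hk
        simp only [Finset.mem_range]
        rcases hk with ⟨hkM, hkf⟩ | ⟨hkf, hkM⟩
        · have := hM hkM
          simp only [Finset.mem_range] at this
          rcases Nat.lt_or_ge k n with h | h
          · exact h
          · exfalso; have : k = n := by omega
            subst this; exact hkf hnself
        · have := hfs hkf
          simp only [Finset.mem_range] at this
          rcases Nat.lt_or_ge k n with h | h
          · exact h
          · exfalso; have : k = n := by omega
            subst this; exact hkM hmem
      have hM'card : M'.card % 2 = 0 := by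
        have h1 := card_symmDiff_mod M (f n)
        have h2 := even_card_f' hfodd hfeven n hn1 hn2
        rw [hM'def]
        omega
      obtain ⟨S, hS1, hS2⟩ := ih (by omega) M' hM'sub hM'card
      refine ⟨symmDiff S {n}, ?_, ?_⟩
      · intro k hk
        rw [Finset.mem_symmDiff] at hk
        rcases hk with ⟨hkS, -⟩ | ⟨hkn, -⟩
        · exact hS1 hkS
        · simp only [Finset.mem_singleton] at hkn
          subst hkn
          simp only [Finset.mem_Icc]
          omega
      · rw [fold_symmDiff_hom, ← hS2, Finset.fold_singleton]
        have hfn : symmDiff (f n) (∅ : Finset ℕ) = f n := by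
          ext k; simp [Finset.mem_symmDiff]
        rw [hfn, hM'def, symmDiff_symmDiff_cancel_right]
    · exact ih (by omega) M (fun k hk => by
        have := hM hk
        simp only [Finset.mem_range] at *
        rcases Nat.lt_or_ge k n with h | h
        · exact h
        · exfalso; have : k = n := by omega
          subst this; exact hmem hk) hcard
end

section
variable {z : ℕ} {f : ℕ → Finset ℕ}
  (hfodd : ∀ i, 1 ≤ i → i ≤ 2 * z → Odd i → f i = Finset.range (i + 1))
  (hfeven : ∀ i, 1 ≤ i → i ≤ 2 * z → Even i → f i = Finset.range (i - 1) ∪ {i})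

include hfodd hfeven

lemma pairing_aux (i j : ℕ) (hi1 : 1 ≤ i) (hi2 : i ≤ 2*z) (hj1 : 1 ≤ j) (hj2 : j ≤ 2*z)
    (hij : i ≤ j) :
    ((f i ∩ f j).card % 2 = 1) ↔ (j = i + 1 ∧ Odd i) := by
  rcases Nat.even_or_odd i with hie | hio <;> rcases Nat.even_or_odd j with hje | hjo
  · -- both even
    rw [Nat.even_iff] at hie hje
    rw [hfeven i hi1 hi2 (Nat.even_iff.mpr hie), hfeven j hj1 hj2 (Nat.even_iff.mpr hje)]
    have heq : (Finset.range (i-1) ∪ {i}) ∩ (Finset.range (j-1) ∪ {j}) =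
        Finset.range (i-1) ∪ {i} := by
      ext k
      simp only [Finset.mem_inter, Finset.mem_union, Finset.mem_range, Finset.mem_singleton]
      omega
    rw [heq, Finset.card_union_of_disjoint (by simp)]
    simp only [Finset.card_range, Finset.card_singleton, Nat.odd_iff]
    omega
  · -- i even, j odd
    rw [Nat.even_iff] at hie
    rw [Nat.odd_iff] at hjo
    rw [hfeven i hi1 hi2 (Nat.even_iff.mpr hie), hfodd j hj1 hj2 (Nat.odd_iff.mpr hjo)]
    have heq : (Finset.range (i-1) ∪ {i}) ∩ Finset.range (j+1) =
        Finset.range (i-1) ∪ {i} := by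
      ext k
      simp only [Finset.mem_inter, Finset.mem_union, Finset.mem_range, Finset.mem_singleton]
      omega
    rw [heq, Finset.card_union_of_disjoint (by simp)]
    simp only [Finset.card_range, Finset.card_singleton, Nat.odd_iff]
    omega
  · -- i odd, j even
    rw [Nat.odd_iff] at hio
    rw [Nat.even_iff] at hje
    rw [hfodd i hi1 hi2 (Nat.odd_iff.mpr hio), hfeven j hj1 hj2 (Nat.even_iff.mpr hje)]
    by_cases hj : j = i + 1
    · have heq : Finset.range (i+1) ∩ (Finset.range (j-1) ∪ {j}) = Finset.range i := by
        ext k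
        simp only [Finset.mem_inter, Finset.mem_union, Finset.mem_range, Finset.mem_singleton]
        omega
      rw [heq]
      simp only [Finset.card_range, Nat.odd_iff]
      omega
    · have heq : Finset.range (i+1) ∩ (Finset.range (j-1) ∪ {j}) = Finset.range (i+1) := by
        ext k
        simp only [Finset.mem_inter, Finset.mem_union, Finset.mem_range, Finset.mem_singleton]
        omega
      rw [heq]
      simp only [Finset.card_range, Nat.odd_iff]
      omega
  · -- both odd
    rw [Nat.odd_iff] at hio hjo
    rw [hfodd i hi1 hi2 (Nat.odd_iff.mpr hio), hfodd j hj1 hj2 (Nat.odd_iff.mpr hjo)]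
    have heq : Finset.range (i+1) ∩ Finset.range (j+1) = Finset.range (i+1) := by
      ext k
      simp only [Finset.mem_inter, Finset.mem_range]
      omega
    rw [heq]
    simp only [Finset.card_range, Nat.odd_iff]
    omega
end

instance : Std.Commutative (fun M N : Finset ℕ => symmDiff M N) := ⟨fun _ _ => symmDiff_comm _ _⟩
instance : Std.Associative (fun M N : Finset ℕ => symmDiff M N) := ⟨fun _ _ _ => symmDiff_assoc _ _ _⟩

theorem stmt_10 (z : ℕ) (hz : 1 ≤ z)
    (f : ℕ → Finset ℕ)
    (hfodd : ∀ i, 1 ≤ i → i ≤ 2 * z → Odd i → f i = Finset.range (i + 1))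
    (hfeven : ∀ i, 1 ≤ i → i ≤ 2 * z → Even i → f i = Finset.range (i - 1) ∪ {i}) :
    (∀ M : Finset ℕ, M ⊆ Finset.range (2 * z + 1) → Even M.card →
      ∃! S : Finset ℕ, S ⊆ Finset.Icc 1 (2 * z) ∧
        M = S.fold (fun M N : Finset ℕ => symmDiff M N) ∅ f) ∧
    (∀ i j, 1 ≤ i → i ≤ 2 * z → 1 ≤ j → j ≤ 2 * z →
      (((f i ∩ f j).card % 2 = 1) ↔ ((j = i + 1 ∧ Odd i) ∨ (i = j + 1 ∧ Odd j)))) := by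
  constructor
  · intro M hM hcard
    obtain ⟨S, hS1, hS2⟩ :=
      exists_rep' hfodd hfeven (2*z+1) le_rfl M hM (Nat.even_iff.mp hcard)
    refine ⟨S, ⟨hS1, hS2⟩, ?_⟩
    rintro T ⟨hT1, hT2⟩
    by_contra hne
    have hUsub : symmDiff T S ⊆ Finset.Icc 1 (2*z) := by
      intro k hk
      rw [Finset.mem_symmDiff] at hk
      rcases hk with ⟨h, -⟩ | ⟨h, -⟩
      · exact hT1 h
      · exact hS1 h
    have hUne : (symmDiff T S).Nonempty := by
      rw [Finset.nonempty_iff_ne_empty]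
      intro h
      exact hne (symmDiff_eq_bot.mp (by rw [Finset.bot_eq_empty]; exact h))
    apply fold_ne_empty' hfodd hfeven _ hUsub hUne
    rw [fold_symmDiff_hom, ← hT2, ← hS2]
    simp [symmDiff_self]
  · intro i j hi1 hi2 hj1 hj2
    rcases le_total i j with h | h
    · rw [pairing_aux hfodd hfeven i j hi1 hi2 hj1 hj2 h]
      constructor
      · exact fun hh => Or.inl hh
      · rintro (hh | ⟨h1, h2⟩)
        · exact hh
        · omega
    · rw [Finset.inter_comm, pairing_aux hfodd hfeven j i hj1 hj2 hi1 hi2 h]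
      constructor
      · exact fun hh => Or.inr hh
      · rintro (⟨h1, h2⟩ | hh)
        · omega
        · exact hh
end

section
/- Let n ≥ 1 and, for 1 ≤ i ≤ n, let v_i = −e_{i−1} + 2e_i − e_{i+1} ∈ ℤⁿ (with the convention e_0 = e_{n+1} = 0). Then: (a) the subgroup of ℤⁿ generated by v_1, …, v_n is exactly {(a_1, …, a_n) ∈ ℤⁿ : a_1 + 2a_2 + ⋯ + n·a_n ≡ 0 mod (n+1)}; (b) for every positive divisor r of n+1, the subgroup {(a_1, …, a_n) ∈ ℤⁿ : a_1 + 2a_2 + ⋯ + n·a_n ≡ 0 mod r} is the unique subgroup of ℤⁿ of index r containing v_1, …, v_n. -/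
/-- The standard basis vectors `e_1, …, e_n` of `ℤⁿ` (indexed `1`-based), with the
convention that `e_j = 0` for `j` outside `{1, …, n}` (in particular `e_0 = e_{n+1} = 0`). -/
def stdE (n j : ℕ) : Fin n → ℤ :=
  if h : 1 ≤ j ∧ j ≤ n then Pi.single (⟨j - 1, by omega⟩ : Fin n) 1 else 0

/-- `v_i = -e_{i-1} + 2·e_i - e_{i+1}`. -/
def vA (n i : ℕ) : Fin n → ℤ := -(stdE n (i - 1)) + 2 • stdE n i - stdE n (i + 1)

namespace Stmt12Aux

/-- The linear form `a ↦ ∑ (k+1) a_k`. -/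
def Sm (n : ℕ) : (Fin n → ℤ) →+ ℤ where
  toFun a := ∑ k : Fin n, ((k : ℕ) + 1 : ℤ) * a k
  map_zero' := by simp
  map_add' a b := by
    simp [mul_add, Finset.sum_add_distrib]

lemma Sm_apply (n : ℕ) (a : Fin n → ℤ) :
    Sm n a = ∑ k : Fin n, ((k : ℕ) + 1 : ℤ) * a k := rfl

lemma Sm_stdE (n : ℕ) {j : ℕ} (h1 : 1 ≤ j) (h2 : j ≤ n) : Sm n (stdE n j) = j := by
  rw [Sm_apply, stdE, dif_pos ⟨h1, h2⟩]
  rw [Finset.sum_eq_single (⟨j - 1, by omega⟩ : Fin n)]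
  · simp; omega
  · intro b _ hb
    rw [Pi.single_eq_of_ne hb, mul_zero]
  · simp

lemma Sm_stdE_zero (n : ℕ) {j : ℕ} (h : ¬(1 ≤ j ∧ j ≤ n)) : Sm n (stdE n j) = 0 := by
  rw [Sm_apply, stdE, dif_neg h]
  simp

lemma stdE_fin (n : ℕ) (k : Fin n) : stdE n ((k : ℕ) + 1) = Pi.single k 1 := by
  rw [stdE, dif_pos ⟨by omega, by omega⟩]
  congr 1

lemma rep (n : ℕ) (a : Fin n → ℤ) : a = ∑ k : Fin n, a k • stdE n ((k : ℕ) + 1) := by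
  simp only [stdE_fin]
  ext j
  simp [Pi.single_apply]

lemma Sm_vA (n : ℕ) {i : ℕ} (h1 : 1 ≤ i) (h2 : i ≤ n) :
    Sm n (vA n i) = 0 ∨ Sm n (vA n i) = (n : ℤ) + 1 := by
  have e : Sm n (vA n i) =
      -(Sm n (stdE n (i - 1))) + 2 * Sm n (stdE n i) - Sm n (stdE n (i + 1)) := by
    simp [vA, two_smul]; ring
  rw [e, Sm_stdE n h1 h2]
  by_cases hi1 : i = 1
  · subst hi1
    rw [Sm_stdE_zero n (by omega)]
    by_cases h1n : n = 1
    · rw [Sm_stdE_zero n (by omega)]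
      right; omega
    · rw [Sm_stdE n (by omega) (by omega)]
      left; omega
  · have : Sm n (stdE n (i - 1)) = ((i - 1 : ℕ) : ℤ) := Sm_stdE n (by omega) (by omega)
    rw [this]
    by_cases hin : i = n
    · rw [Sm_stdE_zero n (by omega)]
      right; omega
    · rw [Sm_stdE n (by omega) (by omega)]
      left; omega

lemma stdE_mem (n : ℕ) (j : ℕ) (hj : j ≤ n) :
    stdE n j - (j : ℤ) • stdE n 1 ∈ AddSubgroup.closure (vA n '' Set.Icc 1 n) := by
  induction j using Nat.strong_induction_on with
  | _ j ih =>
    match j with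
    | 0 =>
      have h0 : stdE n 0 = 0 := by rw [stdE, dif_neg (by omega)]
      simp only [h0, Nat.cast_zero, zero_smul, sub_zero]
      exact zero_mem _
    | 1 => simpa using zero_mem (AddSubgroup.closure (vA n '' Set.Icc 1 n))
    | (m + 2) =>
      have h1 : stdE n m - (m : ℤ) • stdE n 1 ∈ AddSubgroup.closure (vA n '' Set.Icc 1 n) :=
        ih m (by omega) (by omega)
      have h2 : stdE n (m + 1) - ((m + 1 : ℕ) : ℤ) • stdE n 1 ∈
          AddSubgroup.closure (vA n '' Set.Icc 1 n) := ih (m + 1) (by omega) (by omega)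
      have hv : vA n (m + 1) ∈ AddSubgroup.closure (vA n '' Set.Icc 1 n) :=
        AddSubgroup.subset_closure ⟨m + 1, ⟨by omega, by omega⟩, rfl⟩
      have key : stdE n (m + 2) - ((m + 2 : ℕ) : ℤ) • stdE n 1 =
          2 • (stdE n (m + 1) - ((m + 1 : ℕ) : ℤ) • stdE n 1) -
            (stdE n m - (m : ℤ) • stdE n 1) - vA n (m + 1) := by
        have hvv : vA n (m + 1) = -(stdE n m) + 2 • stdE n (m + 1) - stdE n (m + 2) := by
          rw [vA]; norm_num
        rw [hvv]
        push_cast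
        module
      rw [key]
      exact sub_mem (sub_mem (nsmul_mem h2 2) h1) hv

lemma e1_mem (n : ℕ) (hn : 1 ≤ n) :
    ((n : ℤ) + 1) • stdE n 1 ∈ AddSubgroup.closure (vA n '' Set.Icc 1 n) := by
  have hA := stdE_mem n (n - 1) (by omega)
  have hB := stdE_mem n n le_rfl
  have hv : vA n n ∈ AddSubgroup.closure (vA n '' Set.Icc 1 n) :=
    AddSubgroup.subset_closure ⟨n, ⟨hn, le_rfl⟩, rfl⟩
  have key : ((n : ℤ) + 1) • stdE n 1 =
      vA n n + (stdE n (n - 1) - ((n - 1 : ℕ) : ℤ) • stdE n 1) -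
        2 • (stdE n n - (n : ℤ) • stdE n 1) := by
    have hvv : vA n n = -(stdE n (n - 1)) + 2 • stdE n n := by
      rw [vA]
      have : stdE n (n + 1) = 0 := by rw [stdE, dif_neg (by omega)]
      rw [this]; abel
    rw [hvv, Nat.cast_sub hn]
    push_cast
    module
  rw [key]
  exact sub_mem (add_mem hv hA) (nsmul_mem hB 2)

lemma mem_closure_of_dvd (n : ℕ) (hn : 1 ≤ n) (a : Fin n → ℤ)
    (ha : ((n : ℤ) + 1) ∣ Sm n a) :
    a ∈ AddSubgroup.closure (vA n '' Set.Icc 1 n) := by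
  have hrep : a - Sm n a • stdE n 1 ∈ AddSubgroup.closure (vA n '' Set.Icc 1 n) := by
    have hid : a - Sm n a • stdE n 1 =
        ∑ k : Fin n, a k • (stdE n ((k : ℕ) + 1) - (((k : ℕ) + 1 : ℕ) : ℤ) • stdE n 1) := by
      rw [Sm_apply]
      simp only [smul_sub, smul_smul]
      rw [Finset.sum_sub_distrib, ← rep n a, ← Finset.sum_smul]
      congr 2
      refine Finset.sum_congr rfl fun k _ => ?_
      push_cast
      ring
    rw [hid]
    exact AddSubgroup.sum_mem _ fun k _ =>
      AddSubgroup.zsmul_mem _ (stdE_mem n ((k : ℕ) + 1) (by omega)) _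
  obtain ⟨t, ht⟩ := ha
  have hdec : a = (a - Sm n a • stdE n 1) + t • (((n : ℤ) + 1) • stdE n 1) := by
    rw [smul_smul, ht]
    module
  rw [hdec]
  exact add_mem hrep (AddSubgroup.zsmul_mem _ (e1_mem n hn) t)

/-- The subgroup `{a : r ∣ ∑ (k+1) a_k}`. -/
def D (n r : ℕ) : AddSubgroup (Fin n → ℤ) :=
  AddSubgroup.comap (Sm n) (AddSubgroup.zmultiples (r : ℤ))

lemma mem_D (n r : ℕ) (a : Fin n → ℤ) : a ∈ D n r ↔ (r : ℤ) ∣ Sm n a := by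
  rw [D, AddSubgroup.mem_comap, Int.mem_zmultiples_iff]

lemma Sm_surj (n : ℕ) (hn : 1 ≤ n) : Function.Surjective (Sm n) := by
  intro x
  refine ⟨x • stdE n 1, ?_⟩
  rw [map_zsmul, Sm_stdE n le_rfl hn]
  simp

lemma index_D (n : ℕ) (hn : 1 ≤ n) (r : ℕ) : (D n r).index = r := by
  rw [D, AddSubgroup.index_comap_of_surjective _ (Sm_surj n hn), Int.index_zmultiples,
    Int.natAbs_natCast]

theorem partA (n : ℕ) (hn : 1 ≤ n) (a : Fin n → ℤ) :
    a ∈ AddSubgroup.closure (vA n '' Set.Icc 1 n) ↔ ((n : ℤ) + 1) ∣ Sm n a := by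
  constructor
  · intro h
    have hsub : AddSubgroup.closure (vA n '' Set.Icc 1 n) ≤ D n (n + 1) := by
      rw [AddSubgroup.closure_le]
      rintro x ⟨i, ⟨hi1, hi2⟩, rfl⟩
      rw [SetLike.mem_coe, mem_D]
      rcases Sm_vA n hi1 hi2 with h0 | h0 <;> rw [h0]
      · exact dvd_zero _
      · exact ⟨1, by push_cast; ring⟩
    have := hsub h
    rw [mem_D] at this
    exact_mod_cast this
  · exact mem_closure_of_dvd n hn a

theorem partB (n : ℕ) (hn : 1 ≤ n) (r : ℕ) (hr0 : 0 < r) (hr : r ∣ n + 1)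
    (K : AddSubgroup (Fin n → ℤ)) :
    ((∀ i ∈ Set.Icc 1 n, vA n i ∈ K) ∧ K.index = r) ↔
      (∀ a : Fin n → ℤ, a ∈ K ↔ (r : ℤ) ∣ Sm n a) := by
  constructor
  · rintro ⟨h1, h2⟩
    -- K contains D n (n+1)
    have hDK : D n (n + 1) ≤ K := by
      intro a ha
      rw [mem_D] at ha
      have : a ∈ AddSubgroup.closure (vA n '' Set.Icc 1 n) :=
        mem_closure_of_dvd n hn a (by exact_mod_cast ha)
      refine (AddSubgroup.closure_le K).mpr ?_ this
      rintro x ⟨i, ⟨hi1, hi2⟩, rfl⟩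
      exact h1 i ⟨hi1, hi2⟩
    set L : AddSubgroup ℤ := AddSubgroup.map (Sm n) K with hL
    have hKL : K = AddSubgroup.comap (Sm n) L := by
      apply le_antisymm
      · intro a ha
        exact AddSubgroup.mem_comap.mpr (AddSubgroup.mem_map_of_mem _ ha)
      · intro a ha
        rw [AddSubgroup.mem_comap, hL] at ha
        obtain ⟨b, hb, hba⟩ := ha
        have hab : a - b ∈ D n (n + 1) := by
          rw [mem_D, map_sub, hba, sub_self]
          exact dvd_zero _
        have : a = b + (a - b) := by ring
        rw [this]
        exact add_mem hb (hDK hab)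
    obtain ⟨d, hd⟩ := Int.subgroup_cyclic L
    rw [← AddSubgroup.zmultiples_eq_closure] at hd
    have hidx : d.natAbs = r := by
      rw [hKL, hd, AddSubgroup.index_comap_of_surjective _ (Sm_surj n hn),
        Int.index_zmultiples] at h2
      exact h2
    intro a
    rw [hKL, hd, AddSubgroup.mem_comap, Int.mem_zmultiples_iff, ← hidx,
      Int.natAbs_dvd]
  · intro h
    have hKD : K = D n r := by
      ext a
      rw [h a, mem_D]
    constructor
    · intro i ⟨hi1, hi2⟩
      rw [h]
      rcases Sm_vA n hi1 hi2 with h0 | h0 <;> rw [h0]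
      · exact dvd_zero _
      · exact_mod_cast Int.natCast_dvd_natCast.mpr hr
    · rw [hKD]
      exact index_D n hn r

end Stmt12Aux

theorem stmt_12 (n : ℕ) (hn : 1 ≤ n) :
    (∀ a : Fin n → ℤ,
      a ∈ AddSubgroup.closure (vA n '' Set.Icc 1 n) ↔
        ((n : ℤ) + 1) ∣ ∑ k : Fin n, ((k : ℕ) + 1 : ℤ) * a k) ∧
    (∀ r : ℕ, 0 < r → r ∣ n + 1 →
      ∀ K : AddSubgroup (Fin n → ℤ),
        ((∀ i ∈ Set.Icc 1 n, vA n i ∈ K) ∧ K.index = r) ↔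
          (∀ a : Fin n → ℤ, a ∈ K ↔ (r : ℤ) ∣ ∑ k : Fin n, ((k : ℕ) + 1 : ℤ) * a k)) :=
  ⟨Stmt12Aux.partA n hn, fun r hr0 hr K => Stmt12Aux.partB n hn r hr0 hr K⟩
end

section
/- Let n ≥ 2 and consider the vectors of ℤⁿ: v_1 = 2e_1 − e_2, v_i = −e_{i−1} + 2e_i − e_{i+1} for 2 ≤ i ≤ n−1, and v_n = −2e_{n−1} + 2e_n. Then the subgroup of ℤⁿ generated by v_1, …, v_n is exactly {(a_1, …, a_n) ∈ ℤⁿ : the sum of the a_i over all odd indices i is even}. -/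
/-- Type `B_n` vectors: `v_1 = 2e_1 - e_2`, `v_i = -e_{i-1} + 2e_i - e_{i+1}` for
`2 ≤ i ≤ n-1`, and `v_n = -2e_{n-1} + 2e_n`. -/
def vB (n i : ℕ) : Fin n → ℤ :=
  if i = n then -(2 • stdE n (n - 1)) + 2 • stdE n n
  else -(stdE n (i - 1)) + 2 • stdE n i - stdE n (i + 1)

/-!
Each `v_i` has even odd-coordinate sum: for `i < n` its two coefficients `-1` sit at the indices
`i ± 1`, which have the same parity, and `v_n` has even coefficients.

Conversely, let `d = e_n - e_{n-1}`, so that `v_n = 2d`. The tail sums `v_i + ⋯ + v_n` equal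
`e_i - e_{i-1} + d`, and their partial sums are `e_j + j d`. Hence modulo the lattice
`a ≡ -(∑ j a_j) d`; since `∑ j a_j` has the parity of the odd-coordinate sum of `a` and
`2d = v_n`, this vanishes when that sum is even.
-/

open Finset

namespace TypeBLattice

variable {n : ℕ}

abbrev vBLattice (n : ℕ) : AddSubgroup (Fin n → ℤ) :=
  AddSubgroup.closure (vB n '' Set.Icc 1 n)

lemma vB_mem_vBLattice {i : ℕ} (hi : i ∈ Set.Icc 1 n) : vB n i ∈ vBLattice n :=
  AddSubgroup.subset_closure (Set.mem_image_of_mem _ hi)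

def oddCoordSum (n : ℕ) : (Fin n → ℤ) →+ ℤ where
  toFun a := ∑ k ∈ univ.filter (fun k : Fin n => Odd ((k : ℕ) + 1)), a k
  map_zero' := by simp
  map_add' _ _ := sum_add_distrib

def evenOddCoordSum (n : ℕ) : AddSubgroup (Fin n → ℤ) :=
  (AddSubgroup.zmultiples 2).comap (oddCoordSum n)

lemma mem_evenOddCoordSum {a : Fin n → ℤ} :
    a ∈ evenOddCoordSum n ↔ 2 ∣ oddCoordSum n a :=
  Int.mem_zmultiples_iff

lemma stdE_zero : stdE n 0 = 0 := dif_neg (by omega)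

lemma stdE_succ (k : Fin n) : stdE n ((k : ℕ) + 1) = Pi.single k 1 := by
  rw [stdE, dif_pos ⟨Nat.le_add_left _ _, k.isLt⟩]
  rfl

lemma oddCoordSum_stdE {j : ℕ} (hj : j ≤ n) :
    oddCoordSum n (stdE n j) = if Odd j then 1 else 0 := by
  rcases j with _ | k
  · simp [stdE_zero]
  · rw [show stdE n (k + 1) = Pi.single (⟨k, hj⟩ : Fin n) 1 from stdE_succ ⟨k, hj⟩]
    simp [oddCoordSum, sum_pi_single']

lemma two_dvd_oddCoordSum_vB {i : ℕ} (hi : i ∈ Set.Icc 1 n) : 2 ∣ oddCoordSum n (vB n i) := by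
  obtain ⟨hi1, hin⟩ := hi
  unfold vB
  split_ifs with h
  · rw [map_add, map_neg, map_nsmul, map_nsmul, ← smul_neg, ← smul_add, nsmul_eq_mul,
      Nat.cast_ofNat]
    exact dvd_mul_right _ _
  · have hparity : Odd (i + 1) ↔ Odd (i - 1) := by
      simp only [Nat.odd_iff]
      omega
    simp only [map_sub, map_add, map_neg, map_nsmul, oddCoordSum_stdE (show i - 1 ≤ n by omega),
      oddCoordSum_stdE hin, oddCoordSum_stdE (show i + 1 ≤ n by omega), hparity]
    split_ifs <;> norm_num

lemma vBLattice_le_evenOddCoordSum : vBLattice n ≤ evenOddCoordSum n :=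
  (AddSubgroup.closure_le _).2 fun _ ⟨_, hi, hv⟩ =>
    hv ▸ mem_evenOddCoordSum.2 (two_dvd_oddCoordSum_vB hi)

def lastDiff (n : ℕ) : Fin n → ℤ := stdE n n - stdE n (n - 1)

lemma vB_self : vB n n = (2 : ℤ) • lastDiff n := by
  rw [vB, if_pos rfl, lastDiff]
  module

lemma vB_add_tail {i : ℕ} (hi : i ≠ n) :
    vB n i + (stdE n (i + 1) - stdE n i + lastDiff n) =
      stdE n i - stdE n (i - 1) + lastDiff n := by
  rw [vB, if_neg hi]
  module

lemma tail_mem_vBLattice {i : ℕ} (hi : 1 ≤ i) (hin : i ≤ n) :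
    stdE n i - stdE n (i - 1) + lastDiff n ∈ vBLattice n := by
  induction hin using Nat.decreasingInduction with
  | self =>
    rw [show stdE n n - stdE n (n - 1) + lastDiff n = vB n n by rw [vB_self, lastDiff]; module]
    exact vB_mem_vBLattice ⟨hi, le_rfl⟩
  | of_succ k hk ih =>
    rw [← vB_add_tail hk.ne]
    exact add_mem (vB_mem_vBLattice ⟨hi, hk.le⟩) (ih (by omega))

lemma stdE_add_smul_lastDiff_mem_vBLattice {j : ℕ} (hj : j ≤ n) :
    stdE n j + (j : ℤ) • lastDiff n ∈ vBLattice n := by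
  induction j with
  | zero => simp [stdE_zero]
  | succ j ih =>
    have hsplit : stdE n (j + 1) + ((j + 1 : ℕ) : ℤ) • lastDiff n =
        (stdE n j + (j : ℤ) • lastDiff n) + (stdE n (j + 1) - stdE n (j + 1 - 1) + lastDiff n) := by
      rw [Nat.add_sub_cancel]
      push_cast
      module
    rw [hsplit]
    exact add_mem (ih (by omega)) (tail_mem_vBLattice (by omega) hj)

lemma sum_mul_eq_oddCoordSum_add (a : Fin n → ℤ) :
    ∑ k : Fin n, (((k : ℕ) + 1 : ℕ) : ℤ) * a k =
      oddCoordSum n a + 2 * ∑ k : Fin n, ((((k : ℕ) + 1) / 2 : ℕ) : ℤ) * a k := by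
  change _ = ∑ k ∈ univ.filter _, a k + _
  rw [sum_filter, mul_sum, ← sum_add_distrib]
  refine sum_congr rfl fun k _ => ?_
  obtain ⟨m, hm | hm⟩ := Nat.even_or_odd' ((k : ℕ) + 1)
  · have hodd : ¬ Odd ((k : ℕ) + 1) := by rw [Nat.not_odd_iff_even, hm]; exact even_two_mul m
    rw [if_neg hodd, hm, Nat.mul_div_cancel_left m two_pos]
    push_cast
    ring
  · have hodd : Odd ((k : ℕ) + 1) := ⟨m, hm⟩
    rw [if_pos hodd, hm, show (2 * m + 1) / 2 = m by omega]
    push_cast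
    ring

lemma sum_smul_stdE_add_smul_lastDiff (a : Fin n → ℤ) :
    ∑ k : Fin n, a k • (stdE n ((k : ℕ) + 1) + (((k : ℕ) + 1 : ℕ) : ℤ) • lastDiff n) =
      a + (∑ k : Fin n, (((k : ℕ) + 1 : ℕ) : ℤ) * a k) • lastDiff n := by
  simp only [smul_add, stdE_succ, smul_smul, sum_add_distrib, ← sum_smul]
  congr 1
  · exact (pi_eq_sum_univ' a).symm
  · simp_rw [mul_comm]

lemma evenOddCoordSum_le_vBLattice (hn : 1 ≤ n) : evenOddCoordSum n ≤ vBLattice n := by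
  intro a ha
  obtain ⟨m, hm⟩ : 2 ∣ ∑ k : Fin n, (((k : ℕ) + 1 : ℕ) : ℤ) * a k := by
    rw [sum_mul_eq_oddCoordSum_add]
    exact dvd_add (mem_evenOddCoordSum.1 ha) (dvd_mul_right _ _)
  have hdecomp : a =
      ∑ k : Fin n, a k • (stdE n ((k : ℕ) + 1) + (((k : ℕ) + 1 : ℕ) : ℤ) • lastDiff n) -
        m • vB n n := by
    rw [sum_smul_stdE_add_smul_lastDiff, hm, vB_self]
    module
  rw [hdecomp]
  exact sub_mem (sum_mem fun k _ => zsmul_mem (stdE_add_smul_lastDiff_mem_vBLattice k.isLt) _)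
    (zsmul_mem (vB_mem_vBLattice ⟨hn, le_rfl⟩) _)

lemma vBLattice_eq_evenOddCoordSum (hn : 1 ≤ n) : vBLattice n = evenOddCoordSum n :=
  le_antisymm vBLattice_le_evenOddCoordSum (evenOddCoordSum_le_vBLattice hn)

end TypeBLattice

open TypeBLattice in
theorem stmt_13 (n : ℕ) (hn : 2 ≤ n) :
    ∀ a : Fin n → ℤ,
      a ∈ AddSubgroup.closure (vB n '' Set.Icc 1 n) ↔
        (2 : ℤ) ∣ ∑ k ∈ Finset.univ.filter (fun k : Fin n => Odd ((k : ℕ) + 1)), a k :=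
  fun a => (SetLike.ext_iff.1 (vBLattice_eq_evenOddCoordSum (by omega)) a).trans
    mem_evenOddCoordSum
end

section
/- Let n ≥ 2 and consider the vectors of ℤⁿ: v_i = −e_{i−1} + 2e_i − e_{i+1} for 1 ≤ i ≤ n−2 (with e_0 = 0), v_{n−1} = −e_{n−2} + 2e_{n−1} − 2e_n, and v_n = −e_{n−1} + 2e_n. Then the subgroup of ℤⁿ generated by v_1, …, v_n is exactly {(a_1, …, a_n) ∈ ℤⁿ : a_n is even}. -/
/-- Type `C_n` vectors: `v_i = -e_{i-1} + 2e_i - e_{i+1}` for `1 ≤ i ≤ n-2`,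
`v_{n-1} = -e_{n-2} + 2e_{n-1} - 2e_n`, and `v_n = -e_{n-1} + 2e_n`. -/
def vC (n i : ℕ) : Fin n → ℤ :=
  if i = n - 1 then -(stdE n (n - 2)) + 2 • stdE n (n - 1) - 2 • stdE n n
  else -(stdE n (i - 1)) + 2 • stdE n i - stdE n (i + 1)

/-!
Modulo the subgroup `G` generated by the `v_i`, the relations `v_1, …, v_{n-2}` say that
`k ↦ e_k` is an arithmetic progression starting at `e_0 = 0`, so `e_k ≡ k • e_1` for
`k ≤ n - 1`. Then `v_{n-1} + v_n ≡ e_1`, so `e_1, …, e_{n-1}` and `2 • e_n` lie in `G`, and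
these generate the vectors with even last coordinate. Conversely every `v_i` has even last
coordinate.
-/

open QuotientAddGroup

theorem eq_nsmul_of_add_eq_two_nsmul {M : Type*} [AddCommGroup M] {x : ℕ → M} (h0 : x 0 = 0)
    {m : ℕ} (h : ∀ k, k + 1 ≤ m → x k + x (k + 2) = 2 • x (k + 1)) :
    ∀ k ≤ m + 1, x k = k • x 1 := by
  intro k hk
  induction k using Nat.twoStepInduction with
  | zero => simp [h0]
  | one => simp
  | more k ih ih' =>
    have hx : x (k + 2) = 2 • x (k + 1) - x k := eq_sub_of_add_eq' (h k (by omega))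
    rw [hx, ih (by omega), ih' (by omega)]
    module

lemma stdE_apply (n j : ℕ) (x : Fin n) : stdE n j x = if j = x.val + 1 then 1 else 0 := by
  unfold stdE
  split_ifs <;> simp_all [Pi.single_apply, Fin.ext_iff]; omega

lemma stdE_val_succ {n : ℕ} (i : Fin n) : stdE n (i.val + 1) = Pi.single i 1 := by
  ext x
  simp [stdE_apply, Pi.single_apply, Fin.ext_iff, eq_comm]

lemma stdE_zero (n : ℕ) : stdE n 0 = 0 := by
  ext x; simp [stdE_apply]

lemma stdE_succ_self (n : ℕ) : stdE n (n + 1) = 0 := by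
  ext x; simp [stdE_apply]; omega

lemma sum_zsmul_stdE {n : ℕ} (a : Fin n → ℤ) : ∑ i, a i • stdE n (i.val + 1) = a := by
  simpa only [stdE_val_succ, ← Pi.single_smul', smul_eq_mul, mul_one] using
    Finset.univ_sum_single a

lemma two_dvd_vC_apply_last {n i : ℕ} (hn : 2 ≤ n) (hi : i ≤ n) :
    (2 : ℤ) ∣ vC n i ⟨n - 1, Nat.sub_one_lt_of_lt hn⟩ := by
  unfold vC
  split_ifs <;> simp [stdE_apply] <;> split_ifs <;> omega

section closure

variable {n : ℕ}

local notation "G" => AddSubgroup.closure (vC n '' Set.Icc 1 n)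

local notation "Q" => (Fin n → ℤ) ⧸ G

lemma mk_vC_eq_zero {i : ℕ} (h1 : 1 ≤ i) (h2 : i ≤ n) : (vC n i : Q) = 0 :=
  (eq_zero_iff _).2 (AddSubgroup.subset_closure ⟨i, ⟨h1, h2⟩, rfl⟩)

lemma mk_stdE_eq_nsmul (hn : 2 ≤ n) :
    ∀ k ≤ n - 1, (stdE n k : Q) = k • (stdE n 1 : Q) := by
  obtain ⟨m, rfl⟩ : ∃ m, n = m + 2 := ⟨n - 2, by omega⟩
  refine eq_nsmul_of_add_eq_two_nsmul (by rw [stdE_zero, mk_zero]) (m := m) fun k hk => ?_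
  have hv := mk_vC_eq_zero (n := m + 2) (i := k + 1) (by omega) (by omega)
  rw [vC, if_neg (by omega)] at hv
  simp only [mk_sub, mk_add, mk_neg, mk_nsmul, Nat.add_sub_cancel] at hv
  linear_combination (norm := module) -hv

lemma mk_stdE_one_eq_zero (hn : 2 ≤ n) : (stdE n 1 : Q) = 0 := by
  have hx := mk_stdE_eq_nsmul hn
  obtain ⟨m, rfl⟩ : ∃ m, n = m + 2 := ⟨n - 2, by omega⟩
  have hv := mk_vC_eq_zero (n := m + 2) (i := m + 1) (by omega) (by omega)
  have hv' := mk_vC_eq_zero (n := m + 2) (i := m + 2) (by omega) le_rfl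
  rw [vC, if_pos (by omega)] at hv
  rw [vC, if_neg (by omega), stdE_succ_self] at hv'
  rw [show m + 2 - 1 = m + 1 from rfl] at hv hv'
  simp only [mk_sub, mk_add, mk_neg, mk_nsmul, mk_zero, Nat.add_sub_cancel,
    hx m (by omega), hx (m + 1) (by omega)] at hv hv'
  linear_combination (norm := module) hv + hv'

lemma mk_stdE_eq_zero (hn : 2 ≤ n) {k : ℕ} (hk : k ≤ n - 1) : (stdE n k : Q) = 0 := by
  rw [mk_stdE_eq_nsmul hn k hk, mk_stdE_one_eq_zero hn, smul_zero]

lemma two_nsmul_mk_stdE_self (hn : 2 ≤ n) : 2 • (stdE n n : Q) = 0 := by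
  have hv := mk_vC_eq_zero (n := n) (i := n) (by omega) le_rfl
  rw [vC, if_neg (by omega), stdE_succ_self] at hv
  simp only [mk_sub, mk_add, mk_neg, mk_nsmul, mk_zero, mk_stdE_eq_zero hn le_rfl] at hv
  simpa using hv

lemma two_dvd_apply_last_of_mem_closure (hn : 2 ≤ n) {a : Fin n → ℤ} (ha : a ∈ G) :
    (2 : ℤ) ∣ a ⟨n - 1, Nat.sub_one_lt_of_lt hn⟩ := by
  induction ha using AddSubgroup.closure_induction with
  | mem _ hv =>
    obtain ⟨i, ⟨-, hi⟩, rfl⟩ := hv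
    exact two_dvd_vC_apply_last hn hi
  | zero => exact dvd_zero 2
  | add _ _ _ _ h h' => exact dvd_add h h'
  | neg _ _ h => exact dvd_neg.2 h

lemma mem_closure_of_two_dvd_apply_last (hn : 2 ≤ n) {a : Fin n → ℤ}
    (h : (2 : ℤ) ∣ a ⟨n - 1, Nat.sub_one_lt_of_lt hn⟩) : a ∈ G := by
  obtain ⟨c, hc⟩ := h
  rw [← eq_zero_iff, ← sum_zsmul_stdE a]
  simp only [mk_sum, mk_zsmul]
  refine Finset.sum_eq_zero fun i _ => ?_
  rcases lt_or_eq_of_le (Nat.le_sub_one_of_lt i.isLt) with hi | hi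
  · rw [mk_stdE_eq_zero hn (by omega), smul_zero]
  · rw [show i = ⟨n - 1, by omega⟩ from Fin.ext hi, hc, mul_comm,
      Nat.sub_add_cancel (by omega), mul_zsmul, two_zsmul, ← two_nsmul,
      two_nsmul_mk_stdE_self hn, smul_zero]

end closure

theorem stmt_14 (n : ℕ) (hn : 2 ≤ n) :
    ∀ a : Fin n → ℤ,
      a ∈ AddSubgroup.closure (vC n '' Set.Icc 1 n) ↔
        (2 : ℤ) ∣ a ⟨n - 1, by omega⟩ := by
  exact fun _ => ⟨two_dvd_apply_last_of_mem_closure hn, mem_closure_of_two_dvd_apply_last hn⟩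
end

section
/- Let G be a finite group, α an automorphism of G, and M, U two subgroups of G with M ∩ U = {1} such that the set P = {m·u : m ∈ M, u ∈ U} is a subgroup of G. Let φ : M → ℂ and let φ̃ : G → ℂ be its extension defined by φ̃(m·u) = φ(m) for m ∈ M, u ∈ U, and φ̃(g) = 0 for g ∉ P. Define Ind(φ) : G → ℂ by Ind(φ)(g) = (1/|P|) · ∑ φ(m), the sum running over all triples (x, m, u) ∈ G × M × U with g = α(x)⁻¹ · m · u · x. Then: (a) for all g ∈ G, Ind(φ)(g) = (1/|P|) · ∑_{x ∈ G} φ̃(α(x) · g · x⁻¹); and (b) the function Ind(φ) − (|G|/|P|)·φ̃ lies in the linear span of the functions of the form g ↦ f(α(x) · g · x⁻¹) − f(g), where x ranges over G and f over all functions G → ℂ. -/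
/-!
Substituting `g = (α x)⁻¹ * h * x` turns the sum over triples into a sum over `x` of the sums over
the factorisations `h = m * u` of `h = α x * g * x⁻¹`. Since `M ⊓ U = ⊥`, such a factorisation is
unique when it exists, so the inner sum is `φ̃ h`; this is (a). For (b), `|G| • φ̃` is the sum of
`|G|` copies of `φ̃`, so `Ind φ - (|G|/|P|) • φ̃` is `1/|P|` times the sum over `x` of the
generators `g ↦ φ̃ (α x * g * x⁻¹) - φ̃ g`.
-/

open Finset

section

variable {G : Type*} [Group G]

open scoped Pointwise in
theorem Subgroup.sum_factorizations_eq_of_disjoint [DecidableEq G] {β : Type*} [AddCommMonoid β]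
    {M U : Subgroup G} [Fintype M] [Fintype U] (hMU : Disjoint M U) {f : M → β} {F : G → β}
    (hF : ∀ (m : M) (u : U), F (m * u) = f m) (hF0 : ∀ g ∉ (M : Set G) * (U : Set G), F g = 0)
    (h : G) :
    ∑ p ∈ univ.filter (fun p : M × U => h = p.1 * p.2), f p.1 = F h := by
  by_cases hh : h ∈ (M : Set G) * (U : Set G)
  · obtain ⟨m, hm, u, hu, rfl⟩ := hh
    have hfiber : univ.filter (fun p : M × U => m * u = p.1 * p.2) = {(⟨m, hm⟩, ⟨u, hu⟩)} := by
      ext p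
      simpa [eq_comm (a := p)] using
        (Subgroup.mul_injective_of_disjoint hMU).eq_iff (a := (⟨m, hm⟩, ⟨u, hu⟩)) (b := p)
    rw [hfiber, sum_singleton]
    exact (hF ⟨m, hm⟩ ⟨u, hu⟩).symm
  · rw [hF0 h hh]
    refine sum_eq_zero fun p hp => absurd ?_ hh
    rw [(mem_filter.mp hp).2]
    exact Set.mul_mem_mul p.1.2 p.2.2

theorem sum_filter_eq_sum_twisted_conj [Fintype G] [DecidableEq G] {M U : Type*} [Fintype M]
    [Fintype U] {β : Type*} [AddCommMonoid β] (σ : G → G) (i : M → G) (j : U → G) (f : M → β)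
    (g : G) :
    ∑ t ∈ univ.filter (fun t : G × M × U => g = (σ t.1)⁻¹ * i t.2.1 * j t.2.2 * t.1), f t.2.1
      = ∑ x, ∑ p ∈ univ.filter (fun p : M × U => σ x * g * x⁻¹ = i p.1 * j p.2), f p.1 := by
  rw [← univ_product_univ, sum_filter, sum_product]
  refine sum_congr rfl fun x _ => ?_
  rw [sum_filter]
  refine sum_congr rfl fun p _ => if_congr ⟨fun hg => by rw [hg]; group, fun hg => ?_⟩ rfl rfl
  rw [show (σ x)⁻¹ * i p.1 * j p.2 * x = (σ x)⁻¹ * (i p.1 * j p.2) * x by group, ← hg]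
  group

theorem sum_twisted_conj_sub_card_smul_mem_span [Fintype G] {k : Type*} [Ring k]
    (σ : G → G) (F : G → k) :
    (fun g => ∑ x, F (σ x * g * x⁻¹)) - (Fintype.card G : k) • F
      ∈ Submodule.span k {ψ | ∃ (x : G) (f : G → k), ψ = fun g => f (σ x * g * x⁻¹) - f g} := by
  have hsum : (fun g => ∑ x, F (σ x * g * x⁻¹)) - (Fintype.card G : k) • F
      = ∑ x, fun g => F (σ x * g * x⁻¹) - F g := by
    ext g
    simp [sum_sub_distrib]
  rw [hsum]
  exact Submodule.sum_mem _ fun x _ => Submodule.subset_span ⟨x, F, rfl⟩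

end

theorem stmt_19 {G : Type*} [Group G] [Fintype G] [DecidableEq G]
    (α : G ≃* G) (M U : Subgroup G)
    [DecidablePred (· ∈ M)] [DecidablePred (· ∈ U)]
    (hMU : M ⊓ U = ⊥)
    (P : Subgroup G) (hP : (P : Set G) = {g : G | ∃ m ∈ M, ∃ u ∈ U, g = m * u})
    (φ : M → ℂ) (phiT : G → ℂ)
    (hphiT1 : ∀ (m : M) (u : U), phiT ((m : G) * (u : G)) = φ m)
    (hphiT0 : ∀ g : G, g ∉ P → phiT g = 0) :
    (∀ g : G,
      (1 / (Nat.card P : ℂ)) *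
          ∑ t ∈ Finset.univ.filter
            (fun t : G × M × U => g = (α t.1)⁻¹ * (t.2.1 : G) * (t.2.2 : G) * t.1),
            φ t.2.1
        = (1 / (Nat.card P : ℂ)) * ∑ x : G, phiT (α x * g * x⁻¹)) ∧
    ((fun g : G =>
        (1 / (Nat.card P : ℂ)) *
          ∑ t ∈ Finset.univ.filter
            (fun t : G × M × U => g = (α t.1)⁻¹ * (t.2.1 : G) * (t.2.2 : G) * t.1),
            φ t.2.1)
        - ((Nat.card G : ℂ) / (Nat.card P : ℂ)) • phiT)
      ∈ Submodule.span ℂ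
          {ψ : G → ℂ | ∃ (x : G) (f : G → ℂ), ψ = fun g => f (α x * g * x⁻¹) - f g} := by
  open scoped Pointwise in
  have hphiT0' : ∀ g ∉ (M : Set G) * (U : Set G), phiT g = 0 := by
    refine fun g hg => hphiT0 g fun hgP => hg ?_
    obtain ⟨m, hm, u, hu, rfl⟩ : g ∈ {g : G | ∃ m ∈ M, ∃ u ∈ U, g = m * u} := hP ▸ hgP
    exact Set.mul_mem_mul hm hu
  have hInd : ∀ g : G,
      ∑ t ∈ univ.filter
          (fun t : G × M × U => g = (α t.1)⁻¹ * (t.2.1 : G) * (t.2.2 : G) * t.1), φ t.2.1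
        = ∑ x : G, phiT (α x * g * x⁻¹) := fun g => by
    rw [sum_filter_eq_sum_twisted_conj]
    exact sum_congr rfl fun x _ =>
      Subgroup.sum_factorizations_eq_of_disjoint (disjoint_iff.mpr hMU) hphiT1 hphiT0' _
  refine ⟨fun g => by rw [hInd], ?_⟩
  convert Submodule.smul_mem _ (1 / (Nat.card P : ℂ))
    (sum_twisted_conj_sub_card_smul_mem_span α phiT) using 1
  ext g
  simp only [hInd, Nat.card_eq_fintype_card, Pi.sub_apply, Pi.smul_apply, smul_eq_mul]
  ring
end
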